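/- arXiv:2504.14109 — 6 statements merged into one kernel-verified Lean document; each statement's English description precedes it below -/
import Mathlib

section
/- In a concurrent stepped-wedge design with m interventions and I = m(T−1) clusters, the weight matrix H of Theorem 1 equals H = [(1/c)(I_m + (d/g)·J_m)] ⊗ r' − (1/g)·J_m ⊗ v', where c = T(T−1)(3 + b − 2bT)/6, d = T[4T − 2 − 3bT(T−1)]/(12m), g = c − m·d = T(T−2)(2 + b − bT)/12, b = σα²/(Tσα² + σε²/n), r ∈ ℝ^{T−1} has j-th entry (T−j)[1 + b(1−T−j)/2], and v ∈ ℝ^{T−1} has j-th entry (T−j)[1 − bT + j/(T−1)]/(2m). -/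
open Matrix Finset

/-!
With `w = n/σε²` the covariance has inverse `Σ⁻¹ = w (I − b J)`, because `J² = T J`. A cluster
of intervention `k` only touches the `k`-th column of `Xᵢ` and the `k`-th block of columns of
`Zᵢ`, so every sum over clusters collapses onto the `T − 1` sequences of a single standard
stepped wedge and evaluates through the power sums `∑ 1, ∑ l, ∑ l²` over intervals of periods.
This gives `A_W = w (c I − d J)` and `B = w (I ⊗ r' − J ⊗ v')` for the bracket `B` in
`H = A_W⁻¹ B`. Since `J² = m J` and `c − m d = g`, `A_W⁻¹ = (w c)⁻¹ (I + (d/g) J)`; multiplying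
out, the coefficient of `J ⊗ v'` is `(1/c) (1 + m d/g) = 1/g`.
-/

lemma Finset.sum_Ico_quadratic (α β γ : ℝ) {a b : ℕ} (hab : a ≤ b) :
    ∑ i ∈ Ico a b, (α + β * i + γ * i ^ 2)
      = (α * b + β * (b * (b - 1) / 2) + γ * (b * (b - 1) * (2 * b - 1) / 6))
        - (α * a + β * (a * (a - 1) / 2) + γ * (a * (a - 1) * (2 * a - 1) / 6)) := by
  let F : ℕ → ℝ := fun x =>
    α * x + β * (x * (x - 1) / 2) + γ * (x * (x - 1) * (2 * x - 1) / 6)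
  have hF : ∀ i : ℕ, F (i + 1) - F i = α + β * i + γ * i ^ 2 := fun i => by
    simp only [F]; push_cast; ring
  simp_rw [← hF]
  exact sum_Ico_sub F hab

lemma Fin.sum_quadratic (n : ℕ) (α β γ : ℝ) :
    ∑ l : Fin n, (α + β * (l : ℕ) + γ * ((l : ℕ) : ℝ) ^ 2)
      = α * n + β * (n * (n - 1) / 2) + γ * (n * (n - 1) * (2 * n - 1) / 6) := by
  rw [Fin.sum_univ_eq_sum_range (fun l => α + β * l + γ * l ^ 2), range_eq_Ico,
    sum_Ico_quadratic _ _ _ (Nat.zero_le n)]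
  simp

lemma Fin.sum_ite_le {M : Type*} [AddCommMonoid M] (n a : ℕ) (f : ℕ → M) :
    ∑ t : Fin n, (if a ≤ (t : ℕ) then f t else 0) = ∑ t ∈ Ico a n, f t := by
  rw [Fin.sum_univ_eq_sum_range (fun t => if a ≤ t then f t else 0), ← sum_filter, range_eq_Ico,
    Ico_filter_le, max_eq_right (Nat.zero_le a)]

lemma Fin.sum_ite_lt {M : Type*} [AddCommMonoid M] (n a : ℕ) (f : ℕ → M) :
    ∑ t : Fin n, (if (t : ℕ) < a then f t else 0) = ∑ t ∈ Ico 0 (min n a), f t := by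
  rw [Fin.sum_univ_eq_sum_range (fun t => if t < a then f t else 0), ← sum_filter, range_eq_Ico,
    Ico_filter_lt]

lemma Fin.sum_ite_val_eq {M : Type*} [AddCommMonoid M] (n a : ℕ) (f : ℕ → M) :
    ∑ t : Fin n, (if (t : ℕ) = a then f t else 0) = if a < n then f a else 0 := by
  simp [Fin.sum_univ_eq_sum_range (fun t => if t = a then f t else 0)]

lemma Fin.sum_ite_le_one {n a : ℕ} (h : a ≤ n) :
    ∑ t : Fin n, (if a ≤ (t : ℕ) then (1 : ℝ) else 0) = n - a := by
  simp [Fin.sum_ite_le n a fun _ => (1 : ℝ), Nat.cast_sub h]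

lemma Fintype.sum_prod_ite_fst_eq {α ι M : Type*} [Fintype α] [Fintype ι] [DecidableEq α]
    [AddCommMonoid M] (p : α) (f : α → ι → M) :
    ∑ i : α × ι, (if p = i.1 then f i.1 i.2 else 0) = ∑ l, f p l := by
  simp [Fintype.sum_prod_type]

namespace Matrix

theorem allOnes_mul_allOnes {ι K : Type*} [Fintype ι] [Semiring K] :
    (of fun _ _ => 1 : Matrix ι ι K) * (of fun _ _ => 1 : Matrix ι ι K)
      = (Fintype.card ι : K) • (of fun _ _ => 1 : Matrix ι ι K) := by
  ext; simp [mul_apply]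

variable {ι κ : Type*} [Fintype ι] [DecidableEq ι]

theorem inv_smul_one_add_smul_of_mul_self_eq {K : Type*} [Field K] {J : Matrix ι ι K}
    {k s a : K} (hJ : J * J = k • J) (hs : s ≠ 0) (hsa : s + k * a ≠ 0) :
    (s • (1 : Matrix ι ι K) + a • J)⁻¹ = s⁻¹ • (1 - (a / (s + k * a)) • J) := by
  apply inv_eq_left_inv
  have key : a / (s + k * a) * (s + k * a) = a := div_mul_cancel₀ a hsa
  simp only [smul_mul_assoc, sub_mul, mul_add, one_mul, mul_one, mul_smul_comm, hJ]
  linear_combination (norm := module)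
    (-s⁻¹ * key) • J + inv_mul_cancel₀ hs • (1 : Matrix ι ι K)

/-- The precision matrix of a compound-symmetric covariance. -/
def csPrecision (ι : Type*) [Fintype ι] [DecidableEq ι] (w b : ℝ) : Matrix ι ι ℝ :=
  w • (1 - b • of fun _ _ => 1)

theorem transpose_mul_csPrecision_apply (M : Matrix ι κ ℝ) (w b : ℝ) (p : κ) (t : ι) :
    (Mᵀ * csPrecision ι w b) p t = w * (M t p - b * ∑ t', M t' p) := by
  rw [csPrecision, Matrix.mul_smul, Matrix.mul_sub, Matrix.mul_one, Matrix.mul_smul]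
  simp [mul_apply]

theorem inv_smul_allOnes_add_smul_one {σ s : ℝ} (hσ : 0 ≤ σ) (hs : 0 < s) :
    (σ • (of fun _ _ => 1 : Matrix ι ι ℝ) + s • 1)⁻¹
      = csPrecision ι s⁻¹ (σ / (Fintype.card ι * σ + s)) := by
  rw [add_comm, inv_smul_one_add_smul_of_mul_self_eq allOnes_mul_allOnes hs.ne' (by positivity),
    csPrecision, add_comm s]

theorem inv_smul_one_sub_smul_allOnes_mul_apply {w c d g : ℝ} (hw : w ≠ 0) (hc : c ≠ 0)
    (hg : g ≠ 0) (hcg : c = g + Fintype.card ι * d) (r v : κ → ℝ) (k k' : ι) (e : κ) :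
    ((w • (c • 1 - d • of fun _ _ => 1 : Matrix ι ι ℝ))⁻¹
        * (w • of fun p (ke : ι × κ) => (if p = ke.1 then r ke.2 else 0) - v ke.2)) k (k', e)
      = 1 / c * ((if k = k' then 1 else 0) + d / g) * r e - 1 / g * v e := by
  have hA : w • (c • 1 - d • of fun _ _ => 1 : Matrix ι ι ℝ)
      = (w * c) • 1 + (-(w * d)) • of fun _ _ => 1 := by module
  have hwg : w * c + Fintype.card ι * -(w * d) = w * g := by rw [hcg]; ring
  rw [hA, inv_smul_one_add_smul_of_mul_self_eq allOnes_mul_allOnes (mul_ne_zero hw hc)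
    (hwg ▸ mul_ne_zero hw hg), hwg]
  simp only [smul_of, mul_apply, smul_apply, sub_apply, one_apply, of_apply,
    Pi.smul_apply, smul_eq_mul, mul_one, mul_sub, mul_ite, mul_zero, sub_mul, ite_mul, zero_mul,
    sum_sub_distrib, sum_ite_eq', mem_univ, if_true, sum_ite_eq, sum_const, card_univ,
    nsmul_eq_mul, one_div]
  subst hcg
  split_ifs <;> field_simp <;> ring

end Matrix

/-- `∑ᵢ Xᵢᵀ W (Yᵢ − Ȳ)` with `Ȳ` the mean of the `Yᵢ`; `A_W` and the bracket `B` of Theorem 1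
are of this form. -/
noncomputable def centeredCross {ι n p q : Type*} [Fintype ι] [Fintype n]
    (X : ι → Matrix n p ℝ) (W : Matrix n n ℝ) (Y : ι → Matrix n q ℝ) : Matrix p q ℝ :=
  ∑ i, (X i)ᵀ * W * Y i - (∑ i, (X i)ᵀ * W) * ((Fintype.card ι : ℝ)⁻¹ • ∑ i, Y i)

-- Cluster `(k, l)` receives intervention `k` from period `l + 1` on; periods are `0, …, T − 1`.
def designX (m T : ℕ) (i : Fin m × Fin (T - 1)) : Matrix (Fin T) (Fin m) ℝ :=
  of fun j k => if k = i.1 ∧ (i.2 : ℕ) + 1 ≤ (j : ℕ) then 1 else 0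

def designZ (m T : ℕ) (i : Fin m × Fin (T - 1)) : Matrix (Fin T) (Fin m × Fin (T - 1)) ℝ :=
  of fun j ke => if ke.1 = i.1 ∧ (j : ℕ) = (i.2 : ℕ) + (ke.2 : ℕ) + 1 then 1 else 0

section Design

variable {m T : ℕ} (w b : ℝ)

lemma transpose_designX_mul_csPrecision_apply (i : Fin m × Fin (T - 1)) (p : Fin m)
    (t : Fin T) :
    ((designX m T i)ᵀ * csPrecision (Fin T) w b) p t
      = if p = i.1 then
          w * ((if (i.2 : ℕ) + 1 ≤ (t : ℕ) then 1 else 0) - b * (T - ((i.2 : ℕ) + 1 : ℕ)))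
        else 0 := by
  rw [transpose_mul_csPrecision_apply]
  by_cases hp : p = i.1
  · simp only [designX, of_apply, hp, true_and, if_true]
    rw [Fin.sum_ite_le_one (by omega)]
  · simp [designX, hp]

lemma transpose_designX_mul_csPrecision_mul_designX_apply (i : Fin m × Fin (T - 1))
    (p q : Fin m) :
    ((designX m T i)ᵀ * csPrecision (Fin T) w b * designX m T i) p q
      = if p = i.1 ∧ q = i.1 then
          w * (T - ((i.2 : ℕ) + 1 : ℕ)) * (1 - b * (T - ((i.2 : ℕ) + 1 : ℕ))) else 0 := by
  simp only [mul_apply (M := _ * _), transpose_designX_mul_csPrecision_apply]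
  by_cases hpq : p = i.1 ∧ q = i.1
  · simp only [designX, of_apply, hpq, true_and, if_true]
    have hδ : ∀ t : Fin T,
        w * ((if (i.2 : ℕ) + 1 ≤ (t : ℕ) then 1 else 0) - b * (T - ((i.2 : ℕ) + 1 : ℕ)))
          * (if (i.2 : ℕ) + 1 ≤ (t : ℕ) then 1 else 0)
        = w * (1 - b * (T - ((i.2 : ℕ) + 1 : ℕ)))
          * (if (i.2 : ℕ) + 1 ≤ (t : ℕ) then 1 else 0) :=
      fun t => by split_ifs <;> ring
    rw [sum_congr rfl fun t _ => hδ t, ← mul_sum, Fin.sum_ite_le_one (by omega)]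
    ring
  · rw [if_neg hpq]
    refine sum_eq_zero fun t _ => ?_
    rcases not_and_or.mp hpq with hp | hq
    · simp [hp]
    · simp [designX, hq]

lemma transpose_designX_mul_csPrecision_mul_designZ_apply (i : Fin m × Fin (T - 1))
    (p k : Fin m) (e : Fin (T - 1)) :
    ((designX m T i)ᵀ * csPrecision (Fin T) w b * designZ m T i) p (k, e)
      = if p = i.1 ∧ k = i.1 ∧ (i.2 : ℕ) + (e : ℕ) + 1 < T then
          w * (1 - b * (T - ((i.2 : ℕ) + 1 : ℕ))) else 0 := by
  simp only [mul_apply (M := _ * _), transpose_designX_mul_csPrecision_apply]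
  by_cases hpk : p = i.1 ∧ k = i.1
  · simp only [designZ, of_apply, hpk, true_and, if_true, mul_boole]
    rw [Fin.sum_ite_val_eq T ((i.2 : ℕ) + (e : ℕ) + 1)
      fun t => w * ((if (i.2 : ℕ) + 1 ≤ t then 1 else 0) - b * (T - ((i.2 : ℕ) + 1 : ℕ)))]
    simp
  · rw [if_neg (by tauto)]
    refine sum_eq_zero fun t _ => ?_
    rcases not_and_or.mp hpk with hp | hk
    · simp [hp]
    · simp [designZ, hk]

lemma sum_ite_succ_le_one (t : Fin T) :
    ∑ l : Fin (T - 1), (if (l : ℕ) + 1 ≤ (t : ℕ) then (1 : ℝ) else 0) = t := by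
  simp_rw [Nat.add_one_le_iff]
  simp [Fin.sum_ite_lt (T - 1) t fun _ => (1 : ℝ), min_eq_right (Nat.le_sub_one_of_lt t.isLt)]

lemma sum_designX_apply (t : Fin T) (q : Fin m) : (∑ i, designX m T i) t q = t := by
  simp only [Matrix.sum_apply, designX, of_apply, ite_and]
  rw [Fintype.sum_prod_ite_fst_eq q
      fun _ (l : Fin (T - 1)) => if (l : ℕ) + 1 ≤ (t : ℕ) then (1 : ℝ) else 0,
    sum_ite_succ_le_one]

lemma sum_designZ_apply (t : Fin T) (k : Fin m) (e : Fin (T - 1)) :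
    (∑ i, designZ m T i) t (k, e) = if (e : ℕ) + 1 ≤ t then 1 else 0 := by
  simp only [Matrix.sum_apply, designZ, of_apply, ite_and]
  rw [Fintype.sum_prod_ite_fst_eq k
    fun _ (l : Fin (T - 1)) => if (t : ℕ) = l + e + 1 then (1 : ℝ) else 0]
  split_ifs with h
  · simp_rw [show ∀ l : ℕ, (t : ℕ) = l + e + 1 ↔ l = t - (e + 1) by omega]
    rw [Fin.sum_ite_val_eq (T - 1) _ fun _ => (1 : ℝ), if_pos (by omega)]
  · exact sum_eq_zero fun l _ => if_neg (by omega)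

lemma sum_transpose_designX_mul_csPrecision_apply (p : Fin m) (t : Fin T) :
    (∑ i, (designX m T i)ᵀ * csPrecision (Fin T) w b) p t
      = w * (t - b * (T * (T - 1) / 2)) := by
  rw [Matrix.sum_apply]
  simp_rw [transpose_designX_mul_csPrecision_apply]
  rw [Fintype.sum_prod_ite_fst_eq p fun _ (l : Fin (T - 1)) =>
      w * ((if (l : ℕ) + 1 ≤ (t : ℕ) then 1 else 0) - b * (T - ((l : ℕ) + 1 : ℕ))),
    ← mul_sum, sum_sub_distrib, ← mul_sum, sum_ite_succ_le_one,
    sum_congr rfl fun (l : Fin (T - 1)) _ =>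
      show (T : ℝ) - ((l : ℕ) + 1 : ℕ) = (T - 1) + (-1) * (l : ℕ) + 0 * ((l : ℕ) : ℝ) ^ 2 by
        push_cast; ring,
    Fin.sum_quadratic, Nat.cast_pred t.pos]
  ring

lemma sum_transpose_designX_mul_csPrecision_mul_designX_apply (hT : 1 ≤ T) (p q : Fin m) :
    (∑ i, (designX m T i)ᵀ * csPrecision (Fin T) w b * designX m T i) p q
      = if p = q then w * (T * (T - 1) / 2 - b * (T * (T - 1) * (2 * T - 1) / 6)) else 0 := by
  rw [Matrix.sum_apply]
  simp_rw [transpose_designX_mul_csPrecision_mul_designX_apply, ite_and]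
  rw [Fintype.sum_prod_ite_fst_eq p fun k (l : Fin (T - 1)) => if q = k then
    w * (T - ((l : ℕ) + 1 : ℕ)) * (1 - b * (T - ((l : ℕ) + 1 : ℕ))) else 0]
  by_cases hpq : p = q
  · simp only [hpq, if_true]
    rw [sum_congr rfl fun (l : Fin (T - 1)) _ =>
      show w * (T - ((l : ℕ) + 1 : ℕ)) * (1 - b * (T - ((l : ℕ) + 1 : ℕ)))
        = w * ((T - 1) * (1 - b * (T - 1))) + w * (2 * b * (T - 1) - 1) * (l : ℕ)
          + (-w * b) * ((l : ℕ) : ℝ) ^ 2 by push_cast; ring,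
      Fin.sum_quadratic, Nat.cast_pred hT]
    ring
  · simp [hpq, Ne.symm hpq]

lemma sum_transpose_designX_mul_csPrecision_mul_designZ_apply (p k : Fin m)
    (e : Fin (T - 1)) :
    (∑ i, (designX m T i)ᵀ * csPrecision (Fin T) w b * designZ m T i) p (k, e)
      = if p = k then
          w * ((T - ((e : ℕ) + 1 : ℕ)) * (1 + b * (1 - T - ((e : ℕ) + 1 : ℕ)) / 2)) else 0 := by
  rw [Matrix.sum_apply]
  simp_rw [transpose_designX_mul_csPrecision_mul_designZ_apply, ite_and]
  rw [Fintype.sum_prod_ite_fst_eq p fun k' (l : Fin (T - 1)) => if k = k' then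
    if (l : ℕ) + e + 1 < T then w * (1 - b * (T - ((l : ℕ) + 1 : ℕ))) else 0 else 0]
  by_cases hpk : p = k
  · simp only [hpk, if_true]
    simp_rw [show ∀ l : ℕ, l + e + 1 < T ↔ l < T - (e + 1) by omega]
    have he : (e : ℕ) + 1 ≤ T := by omega
    rw [Fin.sum_ite_lt (T - 1) (T - (e + 1))
      fun l => w * (1 - b * (T - ((l + 1 : ℕ) : ℝ))), min_eq_right (by omega),
      sum_congr rfl fun l _ => show w * (1 - b * (T - ((l + 1 : ℕ) : ℝ)))
        = w * (1 - b * (T - 1)) + w * b * l + 0 * (l : ℝ) ^ 2 by push_cast; ring,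
      sum_Ico_quadratic _ _ _ (Nat.zero_le _), Nat.cast_sub he]
    push_cast
    ring
  · simp [hpk, Ne.symm hpk]

lemma sum_transpose_designX_mul_csPrecision_mul_sum_designX_apply (p q : Fin m) :
    ((∑ i, (designX m T i)ᵀ * csPrecision (Fin T) w b) * ∑ i, designX m T i) p q
      = w * (T * (T - 1) * (2 * T - 1) / 6 - b * (T * (T - 1) / 2) ^ 2) := by
  simp only [mul_apply, sum_transpose_designX_mul_csPrecision_apply, sum_designX_apply]
  rw [sum_congr rfl fun (t : Fin T) _ =>
    show w * ((t : ℕ) - b * (T * (T - 1) / 2)) * (t : ℕ)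
      = 0 + (-w * b * (T * (T - 1) / 2)) * (t : ℕ) + w * ((t : ℕ) : ℝ) ^ 2 by ring,
    Fin.sum_quadratic]
  ring

lemma sum_transpose_designX_mul_csPrecision_mul_sum_designZ_apply (p k : Fin m)
    (e : Fin (T - 1)) :
    ((∑ i, (designX m T i)ᵀ * csPrecision (Fin T) w b) * ∑ i, designZ m T i) p (k, e)
      = w * ((T - ((e : ℕ) + 1 : ℕ)) * (T + e - b * T * (T - 1)) / 2) := by
  simp only [mul_apply, sum_transpose_designX_mul_csPrecision_apply, sum_designZ_apply,
    mul_boole]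
  have he : (e : ℕ) + 1 ≤ T := by omega
  rw [Fin.sum_ite_le T ((e : ℕ) + 1) fun t => w * ((t : ℝ) - b * (T * (T - 1) / 2)),
    sum_congr rfl fun (t : ℕ) _ => show w * ((t : ℝ) - b * (T * (T - 1) / 2))
      = (-w * b * (T * (T - 1) / 2)) + w * t + 0 * (t : ℝ) ^ 2 by ring,
    sum_Ico_quadratic _ _ _ he]
  push_cast
  ring

lemma centeredCross_designX_designX (hT : 2 ≤ T) {c d : ℝ}
    (hc : c = (T : ℝ) * ((T : ℝ) - 1) * (3 + b - 2 * b * (T : ℝ)) / 6)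
    (hd : d = (T : ℝ) * (4 * (T : ℝ) - 2 - 3 * b * (T : ℝ) * ((T : ℝ) - 1)) / (12 * (m : ℝ))) :
    centeredCross (designX m T) (csPrecision (Fin T) w b) (designX m T)
      = w • (c • 1 - d • of fun _ _ => 1) := by
  ext p q
  have hm : (m : ℝ) ≠ 0 := Nat.cast_ne_zero.2 p.pos.ne'
  have hT1 : (T : ℝ) - 1 ≠ 0 := by
    have : (2 : ℝ) ≤ T := by exact_mod_cast hT
    linarith
  rw [centeredCross, Matrix.sub_apply, Matrix.mul_smul, Matrix.smul_apply,
    sum_transpose_designX_mul_csPrecision_mul_designX_apply _ _ (by omega),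
    sum_transpose_designX_mul_csPrecision_mul_sum_designX_apply, Fintype.card_prod,
    Fintype.card_fin, Fintype.card_fin, Nat.cast_mul, Nat.cast_pred (by omega)]
  simp only [Matrix.smul_apply, Matrix.sub_apply, one_apply, of_apply, smul_eq_mul]
  rw [hc, hd]
  split_ifs <;> field_simp <;> ring

lemma centeredCross_designX_designZ (r v : Fin (T - 1) → ℝ)
    (hr : ∀ j : Fin (T - 1),
      r j = ((T : ℝ) - ((j : ℕ) + 1 : ℕ)) * (1 + b * (1 - (T : ℝ) - ((j : ℕ) + 1 : ℕ)) / 2))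
    (hv : ∀ j : Fin (T - 1),
      v j = ((T : ℝ) - ((j : ℕ) + 1 : ℕ))
        * (1 - b * (T : ℝ) + ((j : ℕ) + 1 : ℕ) / ((T : ℝ) - 1)) / (2 * (m : ℝ))) :
    centeredCross (designX m T) (csPrecision (Fin T) w b) (designZ m T)
      = w • of fun p ke => (if p = ke.1 then r ke.2 else 0) - v ke.2 := by
  ext p ⟨k, e⟩
  have hm : (m : ℝ) ≠ 0 := Nat.cast_ne_zero.2 p.pos.ne'
  have hT : 2 ≤ T := by have := e.isLt; omega
  have hT1 : (T : ℝ) - 1 ≠ 0 := by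
    have : (2 : ℝ) ≤ T := by exact_mod_cast hT
    linarith
  rw [centeredCross, Matrix.sub_apply, Matrix.mul_smul, Matrix.smul_apply,
    sum_transpose_designX_mul_csPrecision_mul_designZ_apply,
    sum_transpose_designX_mul_csPrecision_mul_sum_designZ_apply, Fintype.card_prod,
    Fintype.card_fin, Fintype.card_fin, Nat.cast_mul, Nat.cast_pred (by omega)]
  simp only [Matrix.smul_apply, of_apply, smul_eq_mul]
  rw [hr, hv]
  push_cast
  split_ifs <;> field_simp <;> ring

end Design

theorem concurrent_weight_matrix_general
    (T mI : ℕ) (hT : 3 ≤ T)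
    (salpha seps n : ℝ) (hsalpha : 0 ≤ salpha) (hseps : 0 < seps) (hn : 0 < n)
    (b c d g : ℝ)
    (hb : b = salpha / ((T : ℝ) * salpha + seps / n))
    (hc : c = (T : ℝ) * ((T : ℝ) - 1) * (3 + b - 2 * b * (T : ℝ)) / 6)
    (hd : d = (T : ℝ) * (4 * (T : ℝ) - 2 - 3 * b * (T : ℝ) * ((T : ℝ) - 1)) / (12 * (mI : ℝ)))
    (hg : g = (T : ℝ) * ((T : ℝ) - 2) * (2 + b - b * (T : ℝ)) / 12)
    (hc0 : c ≠ 0) (hg0 : g ≠ 0)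
    (r v : Fin (T - 1) → ℝ)
    (hr : ∀ j : Fin (T - 1),
      r j = ((T : ℝ) - ((j : ℕ) + 1 : ℕ)) * (1 + b * (1 - (T : ℝ) - ((j : ℕ) + 1 : ℕ)) / 2))
    (hv : ∀ j : Fin (T - 1),
      v j = ((T : ℝ) - ((j : ℕ) + 1 : ℕ))
        * (1 - b * (T : ℝ) + ((j : ℕ) + 1 : ℕ) / ((T : ℝ) - 1)) / (2 * (mI : ℝ)))
    -- common covariance matrix Σ = σα²J + (σε²/n)I
    (V : Matrix (Fin T) (Fin T) ℝ)
    (hV : V = salpha • (Matrix.of fun _ _ => (1 : ℝ)) + (seps / n) • 1)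
    -- constant-effect working design matrices
    (X : Fin mI × Fin (T - 1) → Matrix (Fin T) (Fin mI) ℝ)
    (hX : ∀ i j k, X i j k = if k = i.1 ∧ (i.2 : ℕ) + 1 ≤ (j : ℕ) then 1 else 0)
    -- true exposure-time indicator matrices
    (Z : Fin mI × Fin (T - 1) → Matrix (Fin T) (Fin mI × Fin (T - 1)) ℝ)
    (hZ : ∀ i j ke, Z i j ke = if ke.1 = i.1 ∧ (j : ℕ) = (i.2 : ℕ) + (ke.2 : ℕ) + 1 then 1 else 0)
    -- the weight matrix H from Theorem 1
    (S : Matrix (Fin mI) (Fin T) ℝ) (hS : S = ∑ i, (X i)ᵀ * V⁻¹)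
    (AW : Matrix (Fin mI) (Fin mI) ℝ)
    (hAW : AW = (∑ i, (X i)ᵀ * V⁻¹ * X i)
        - S * (((mI * (T - 1) : ℕ) : ℝ)⁻¹ • ∑ i, X i))
    (H : Matrix (Fin mI) (Fin mI × Fin (T - 1)) ℝ)
    (hH : H = AW⁻¹ * ((∑ i, (X i)ᵀ * V⁻¹ * Z i)
        - S * (((mI * (T - 1) : ℕ) : ℝ)⁻¹ • ∑ i, Z i))) :
    ∀ (k k' : Fin mI) (e : Fin (T - 1)),
      H k (k', e) = (1 / c) * ((if k = k' then 1 else 0) + d / g) * r e - (1 / g) * v e := by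
  intro k k' e
  obtain rfl : X = designX mI T := funext fun i => ext (hX i)
  obtain rfl : Z = designZ mI T := funext fun i => ext (hZ i)
  have hVinv : V⁻¹ = csPrecision (Fin T) (n / seps) b := by
    rw [hV, inv_smul_allOnes_add_smul_one hsalpha (div_pos hseps hn), inv_div, Fintype.card_fin,
      ← hb]
  have hcard : ((mI * (T - 1) : ℕ) : ℝ) = Fintype.card (Fin mI × Fin (T - 1)) := by simp
  have hAW' : AW
      = centeredCross (designX mI T) (csPrecision (Fin T) (n / seps) b) (designX mI T) := by
    rw [hAW, hS, hVinv, hcard]; rfl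
  have hH' : H
      = AW⁻¹ * centeredCross (designX mI T) (csPrecision (Fin T) (n / seps) b) (designZ mI T) := by
    rw [hH, hS, hVinv, hcard]; rfl
  have hcg : c = g + Fintype.card (Fin mI) * d := by
    have : (mI : ℝ) ≠ 0 := Nat.cast_ne_zero.2 k.pos.ne'
    rw [hc, hd, hg, Fintype.card_fin]; field_simp; ring
  rw [hH', hAW', centeredCross_designX_designX _ _ (by omega) hc hd,
    centeredCross_designX_designZ _ _ r v hr hv]
  exact inv_smul_one_sub_smul_allOnes_mul_apply (div_pos hn hseps).ne' hc0 hg0 hcg r v k k' e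

/-- Proposition 1: in a concurrent stepped-wedge design with `m` interventions and
`I = m(T−1)` clusters, the weight matrix `H` of Theorem 1 equals
`[(1/c)(I_m + (d/g)·J_m)] ⊗ r' − (1/g)·J_m ⊗ v'`, written entrywise below.
Clusters are indexed by pairs `(k₀, l)` (intervention `k₀`, sequence `l`). -/
theorem concurrent_weight_matrix
    (T mI : ℕ) (hT : 3 ≤ T) (hm : 1 ≤ mI)
    (salpha seps n : ℝ) (hsalpha : 0 ≤ salpha) (hseps : 0 < seps) (hn : 0 < n)
    (b c d g : ℝ)
    (hb : b = salpha / ((T : ℝ) * salpha + seps / n))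
    (hc : c = (T : ℝ) * ((T : ℝ) - 1) * (3 + b - 2 * b * (T : ℝ)) / 6)
    (hd : d = (T : ℝ) * (4 * (T : ℝ) - 2 - 3 * b * (T : ℝ) * ((T : ℝ) - 1)) / (12 * (mI : ℝ)))
    (hg : g = (T : ℝ) * ((T : ℝ) - 2) * (2 + b - b * (T : ℝ)) / 12)
    (hc0 : c ≠ 0) (hg0 : g ≠ 0)
    (r v : Fin (T - 1) → ℝ)
    (hr : ∀ j : Fin (T - 1),
      r j = ((T : ℝ) - ((j : ℕ) + 1 : ℕ)) * (1 + b * (1 - (T : ℝ) - ((j : ℕ) + 1 : ℕ)) / 2))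
    (hv : ∀ j : Fin (T - 1),
      v j = ((T : ℝ) - ((j : ℕ) + 1 : ℕ))
        * (1 - b * (T : ℝ) + ((j : ℕ) + 1 : ℕ) / ((T : ℝ) - 1)) / (2 * (mI : ℝ)))
    -- common covariance matrix Σ = σα²J + (σε²/n)I
    (V : Matrix (Fin T) (Fin T) ℝ)
    (hV : V = salpha • (Matrix.of fun _ _ => (1 : ℝ)) + (seps / n) • 1)
    -- constant-effect working design matrices
    (X : Fin mI × Fin (T - 1) → Matrix (Fin T) (Fin mI) ℝ)
    (hX : ∀ i j k, X i j k = if k = i.1 ∧ (i.2 : ℕ) + 1 ≤ (j : ℕ) then 1 else 0)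
    -- true exposure-time indicator matrices
    (Z : Fin mI × Fin (T - 1) → Matrix (Fin T) (Fin mI × Fin (T - 1)) ℝ)
    (hZ : ∀ i j ke, Z i j ke = if ke.1 = i.1 ∧ (j : ℕ) = (i.2 : ℕ) + (ke.2 : ℕ) + 1 then 1 else 0)
    -- the weight matrix H from Theorem 1
    (S : Matrix (Fin mI) (Fin T) ℝ) (hS : S = ∑ i, (X i)ᵀ * V⁻¹)
    (AW : Matrix (Fin mI) (Fin mI) ℝ)
    (hAW : AW = (∑ i, (X i)ᵀ * V⁻¹ * X i)
        - S * (((mI * (T - 1) : ℕ) : ℝ)⁻¹ • ∑ i, X i))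
    (H : Matrix (Fin mI) (Fin mI × Fin (T - 1)) ℝ)
    (hH : H = AW⁻¹ * ((∑ i, (X i)ᵀ * V⁻¹ * Z i)
        - S * (((mI * (T - 1) : ℕ) : ℝ)⁻¹ • ∑ i, Z i))) :
    ∀ (k k' : Fin mI) (e : Fin (T - 1)),
      H k (k', e) = (1 / c) * ((if k = k' then 1 else 0) + d / g) * r e - (1 / g) * v e :=
  concurrent_weight_matrix_general T mI hT salpha seps n hsalpha hseps hn b c d g hb hc hd hg hc0
    hg0 r v hr hv V hV X hX Z hZ S hS AW hAW H hH
end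

section
/- Under the concurrent design of Proposition 1, the expected constant-effect estimator for intervention k satisfies E(θ̂ₖ) = (1/c)·r'δₖ + (1/g)·((d/c)·r' − v')·δ₊, where δ₊ = Σ_{k=1}^m δₖ is the sum of the exposure-time-specific effect vectors across all interventions, and c, d, g, r, v are as defined in Proposition 1. -/
open Matrix

open Finset

lemma inv_J_add_smul (T : ℕ) (salpha a b : ℝ) (ha : a ≠ 0)
    (hb : salpha = b * ((T:ℝ)*salpha + a)) :
    (salpha • (Matrix.of fun _ _ => (1:ℝ)) + a • (1 : Matrix (Fin T) (Fin T) ℝ))⁻¹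
      = a⁻¹ • ((1 : Matrix (Fin T) (Fin T) ℝ) - b • Matrix.of fun _ _ => (1:ℝ)) := by
  apply Matrix.inv_eq_right_inv
  ext i j
  simp only [Matrix.mul_apply, Matrix.add_apply, Matrix.smul_apply, Matrix.sub_apply,
    Matrix.one_apply, Matrix.of_apply, smul_eq_mul]
  have key : ∀ t : Fin T,
      (salpha * 1 + a * (if i = t then (1:ℝ) else 0)) *
        (a⁻¹ * ((if t = j then (1:ℝ) else 0) - b * 1))
      = (salpha * a⁻¹) * (if t = j then (1:ℝ) else 0) - salpha * a⁻¹ * b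
        + (if i = t then (a * a⁻¹) * ((if t = j then (1:ℝ) else 0) - b) else 0) := by
    intro t
    by_cases h2 : t = j
    · subst h2; by_cases h1 : i = t <;> simp [h1] <;> ring
    · by_cases h1 : i = t <;> simp [h1, h2] <;> ring
  rw [Finset.sum_congr rfl (fun t _ => key t)]
  simp only [Finset.sum_add_distrib, Finset.sum_sub_distrib, ← Finset.mul_sum,
    Finset.sum_ite_eq', Finset.sum_ite_eq, Finset.mem_univ, if_true, Finset.sum_const,
    Finset.card_univ, Fintype.card_fin, nsmul_eq_mul, mul_one]
  rw [mul_inv_cancel₀ ha]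
  by_cases h : i = j <;> simp [h] <;> field_simp <;> nlinarith [hb]

lemma sum_range_cast (N : ℕ) : ∑ j ∈ Finset.range N, (j:ℝ) = N*(N-1)/2 := by
  induction N with
  | zero => simp
  | succ n ih => rw [Finset.sum_range_succ, ih]; push_cast; ring

lemma sum_range_sq_cast (N : ℕ) : ∑ j ∈ Finset.range N, (j:ℝ)^2 = N*(N-1)*(2*N-1)/6 := by
  induction N with
  | zero => simp
  | succ n ih => rw [Finset.sum_range_succ, ih]; push_cast; ring

lemma filter_range_le (a N : ℕ) : (Finset.range N).filter (fun t => a ≤ t) = Finset.Ico a N := by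
  ext t; simp [Finset.mem_filter, Finset.mem_range, Finset.mem_Ico, and_comm]

lemma fin_sum_ite_le (N a : ℕ) (f : ℕ → ℝ) :
    ∑ t : Fin N, (if a ≤ (t:ℕ) then f t else 0) = ∑ t ∈ Finset.Ico a N, f t := by
  rw [Fin.sum_univ_eq_sum_range (fun t => if a ≤ t then f t else 0) N, ← filter_range_le,
    Finset.sum_filter]

lemma sum_Ico_cast_one (a N : ℕ) (h : a ≤ N) : ∑ _t ∈ Finset.Ico a N, (1:ℝ) = N - a := by
  simp only [Finset.sum_const, Nat.card_Ico, nsmul_eq_mul, mul_one]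
  push_cast [h]; ring

lemma sum_Ico_cast_id (a N : ℕ) (h : a ≤ N) :
    ∑ t ∈ Finset.Ico a N, (t:ℝ) = N*(N-1)/2 - a*(a-1)/2 := by
  rw [Finset.sum_Ico_eq_sub _ h, sum_range_cast, sum_range_cast]

lemma ind_count (N a : ℕ) (h : a ≤ N) :
    ∑ t : Fin N, (if a ≤ (t:ℕ) then (1:ℝ) else 0) = N - a := by
  rw [fin_sum_ite_le N a (fun _ => (1:ℝ)), sum_Ico_cast_one a N h]

lemma ind_id (N a : ℕ) (h : a ≤ N) :
    ∑ t : Fin N, (if a ≤ (t:ℕ) then ((t:ℕ):ℝ) else 0) = N*(N-1)/2 - a*(a-1)/2 := by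
  rw [fin_sum_ite_le N a (fun t => (t:ℝ)), sum_Ico_cast_id a N h]

lemma fin_delta_nat (N vv : ℕ) (f : ℕ → ℝ) :
    ∑ t : Fin N, (if (t:ℕ) = vv then f (t:ℕ) else 0) = if vv < N then f vv else 0 := by
  rw [Fin.sum_univ_eq_sum_range (fun t => if t = vv then f t else 0) N,
    Finset.sum_ite_eq' (Finset.range N) vv f]
  simp [Finset.mem_range]

lemma fin_sum_poly (N : ℕ) (p q w : ℝ) :
    ∑ s : Fin N, (p + q * ((s:ℕ):ℝ) + w * ((s:ℕ):ℝ)^2)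
      = (N:ℝ) * p + q * ((N:ℝ)*((N:ℝ)-1)/2) + w * ((N:ℝ)*((N:ℝ)-1)*(2*(N:ℝ)-1)/6) := by
  rw [Finset.sum_add_distrib, Finset.sum_add_distrib, Finset.sum_const, ← Finset.mul_sum,
    ← Finset.mul_sum, Finset.card_univ, Fintype.card_fin, nsmul_eq_mul]
  rw [Fin.sum_univ_eq_sum_range (fun u => ((u:ℕ):ℝ)) N,
    Fin.sum_univ_eq_sum_range (fun u => ((u:ℕ):ℝ)^2) N]
  rw [sum_range_cast, sum_range_sq_cast]

lemma filter_range_add_one_le (a N : ℕ) :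
    (Finset.range N).filter (fun s => s + 1 ≤ a) = Finset.range (min a N) := by
  ext s; simp [Finset.mem_filter, Finset.mem_range]; omega

lemma fin_sum_ite_add_one_le (N a : ℕ) (f : ℕ → ℝ) :
    ∑ s : Fin N, (if (s:ℕ) + 1 ≤ a then f s else 0) = ∑ s ∈ Finset.range (min a N), f s := by
  rw [Fin.sum_univ_eq_sum_range (fun s => if s + 1 ≤ a then f s else 0) N,
    ← filter_range_add_one_le, Finset.sum_filter]

-- the row entries of (X i)ᵀ * W, reused everywhere
lemma aux_XW_row (T mI : ℕ) (a b : ℝ)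
    (X : Fin mI × Fin (T - 1) → Matrix (Fin T) (Fin mI) ℝ)
    (hX : ∀ i j k, X i j k = if k = i.1 ∧ (i.2 : ℕ) + 1 ≤ (j : ℕ) then 1 else 0)
    (W : Matrix (Fin T) (Fin T) ℝ)
    (hW : ∀ t t', W t t' = a⁻¹ * ((if t = t' then (1:ℝ) else 0) - b))
    (k0 : Fin mI) (s : Fin (T-1)) (k : Fin mI) (t' : Fin T) :
    ((X (k0,s))ᵀ * W) k t'
      = if k = k0 then
          a⁻¹ * ((if (s:ℕ)+1 ≤ (t':ℕ) then (1:ℝ) else 0) - b * ((T:ℝ) - ((s:ℕ)+1:ℕ))) else 0 := by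
  have hs : (s:ℕ) + 1 ≤ T := by have := s.isLt; omega
  rw [Matrix.mul_apply]
  simp only [Matrix.transpose_apply, hX, hW]
  by_cases hk : k = k0
  · have step : ∀ t : Fin T,
        (if k = k0 ∧ (s:ℕ) + 1 ≤ (t:ℕ) then (1:ℝ) else 0) *
          (a⁻¹ * ((if t = t' then (1:ℝ) else 0) - b))
        = a⁻¹ * ((if (t:ℕ) = (t':ℕ) then (if (s:ℕ)+1 ≤ (t:ℕ) then (1:ℝ) else 0) else 0)
          - b * (if (s:ℕ)+1 ≤ (t:ℕ) then (1:ℝ) else 0)) := by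
      intro t
      by_cases h2 : t = t'
      · subst h2
        by_cases h1 : (s:ℕ)+1 ≤ (t:ℕ) <;> simp [h1, hk] <;> ring
      · have h2' : ¬((t:ℕ) = (t':ℕ)) := fun h => h2 (Fin.ext h)
        by_cases h1 : (s:ℕ)+1 ≤ (t:ℕ) <;> simp [h1, h2, h2', hk] <;> ring
    rw [Finset.sum_congr rfl (fun t _ => step t), ← Finset.mul_sum, Finset.sum_sub_distrib,
      fin_delta_nat T (t':ℕ) (fun u => if (s:ℕ)+1 ≤ u then (1:ℝ) else 0),
      ← Finset.mul_sum, ind_count T ((s:ℕ)+1) hs]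
    have ht' : (t':ℕ) < T := t'.isLt
    simp only [ht', if_true, hk]
    try push_cast
    try ring
  · simp [hk]

lemma aux_S (T mI : ℕ) (hT : 3 ≤ T) (a b : ℝ)
    (X : Fin mI × Fin (T - 1) → Matrix (Fin T) (Fin mI) ℝ)
    (hX : ∀ i j k, X i j k = if k = i.1 ∧ (i.2 : ℕ) + 1 ≤ (j : ℕ) then 1 else 0)
    (W : Matrix (Fin T) (Fin T) ℝ)
    (hW : ∀ t t', W t t' = a⁻¹ * ((if t = t' then (1:ℝ) else 0) - b))
    (k : Fin mI) (t : Fin T) :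
    (∑ i, (X i)ᵀ * W) k t = a⁻¹ * (((t:ℕ):ℝ) - b * (T:ℝ) * ((T:ℝ)-1)/2) := by
  rw [Matrix.sum_apply, Fintype.sum_prod_type]
  have inner : ∀ k0 : Fin mI, ∀ s : Fin (T-1),
      ((X (k0,s))ᵀ * W) k t
      = if k = k0 then
          a⁻¹ * ((if (s:ℕ)+1 ≤ (t:ℕ) then (1:ℝ) else 0) - b * ((T:ℝ) - ((s:ℕ)+1:ℕ))) else 0 :=
    fun k0 s => aux_XW_row T mI a b X hX W hW k0 s k t
  rw [Finset.sum_congr rfl (fun k0 _ => Finset.sum_congr rfl (fun s _ => inner k0 s))]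
  rw [Finset.sum_comm]
  have h2 : ∀ s : Fin (T-1),
      (∑ k0 : Fin mI, if k = k0 then
        a⁻¹ * ((if (s:ℕ)+1 ≤ (t:ℕ) then (1:ℝ) else 0) - b * ((T:ℝ) - ((s:ℕ)+1:ℕ))) else 0)
      = a⁻¹ * (if (s:ℕ)+1 ≤ (t:ℕ) then (1:ℝ) else 0)
        + (a⁻¹ * (-b) * ((T:ℝ) - 1) + a⁻¹ * b * ((s:ℕ):ℝ)) := by
    intro s
    rw [Finset.sum_ite_eq Finset.univ k]
    simp only [Finset.mem_univ, if_true]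
    push_cast; ring
  rw [Finset.sum_congr rfl (fun s _ => h2 s), Finset.sum_add_distrib, ← Finset.mul_sum]
  rw [fin_sum_ite_add_one_le (T-1) (t:ℕ) (fun _ => (1:ℝ))]
  have hmin : min (t:ℕ) (T-1) = (t:ℕ) := by have := t.isLt; omega
  rw [hmin, Finset.sum_const, Finset.card_range, nsmul_eq_mul, mul_one]
  have : ∀ s : Fin (T-1), (a⁻¹ * (-b) * ((T:ℝ) - 1) + a⁻¹ * b * ((s:ℕ):ℝ))
      = (a⁻¹ * (-b) * ((T:ℝ) - 1)) + (a⁻¹ * b) * ((s:ℕ):ℝ) + 0 * ((s:ℕ):ℝ)^2 := by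
    intro s; ring
  rw [Finset.sum_congr rfl (fun s _ => this s), fin_sum_poly]
  have hc1 : ((T - 1 : ℕ) : ℝ) = (T:ℝ) - 1 := by
    have h1 : (1:ℕ) ≤ T := by omega
    push_cast [h1]; ring
  rw [hc1]; ring

lemma aux_sumX (T mI : ℕ) (X : Fin mI × Fin (T - 1) → Matrix (Fin T) (Fin mI) ℝ)
    (hX : ∀ i j k, X i j k = if k = i.1 ∧ (i.2 : ℕ) + 1 ≤ (j : ℕ) then 1 else 0)
    (t : Fin T) (k : Fin mI) :
    (∑ i, X i) t k = ((t:ℕ):ℝ) := by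
  rw [Matrix.sum_apply, Fintype.sum_prod_type]
  simp only [hX]
  have h1 : ∀ k0 : Fin mI, ∀ s : Fin (T-1),
      (if k = k0 ∧ (s:ℕ) + 1 ≤ (t:ℕ) then (1:ℝ) else 0)
      = if k = k0 then (if (s:ℕ) + 1 ≤ (t:ℕ) then (1:ℝ) else 0) else 0 := by
    intro k0 s
    by_cases h : k = k0 <;> simp [h]
  rw [Finset.sum_congr rfl (fun k0 _ => Finset.sum_congr rfl (fun s _ => h1 k0 s))]
  rw [Finset.sum_comm]
  have h2 : ∀ s : Fin (T-1),
      (∑ k0 : Fin mI, if k = k0 then (if (s:ℕ) + 1 ≤ (t:ℕ) then (1:ℝ) else 0) else 0)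
      = if (s:ℕ) + 1 ≤ (t:ℕ) then (1:ℝ) else 0 := by
    intro s
    rw [Finset.sum_ite_eq Finset.univ k]
    simp only [Finset.mem_univ, if_true]
  rw [Finset.sum_congr rfl (fun s _ => h2 s)]
  rw [fin_sum_ite_add_one_le (T-1) (t:ℕ) (fun _ => (1:ℝ))]
  have hmin : min (t:ℕ) (T-1) = (t:ℕ) := by have := t.isLt; omega
  rw [hmin, Finset.sum_const, Finset.card_range, nsmul_eq_mul, mul_one]

lemma aux_sumZ (T mI : ℕ) (hT : 3 ≤ T)
    (Z : Fin mI × Fin (T - 1) → Matrix (Fin T) (Fin mI × Fin (T - 1)) ℝ)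
    (hZ : ∀ i j ke, Z i j ke = if ke.1 = i.1 ∧ (j : ℕ) = (i.2 : ℕ) + (ke.2 : ℕ) + 1 then 1 else 0)
    (t : Fin T) (k : Fin mI) (e : Fin (T-1)) :
    (∑ i, Z i) t (k, e) = if (e:ℕ) + 1 ≤ (t:ℕ) then (1:ℝ) else 0 := by
  rw [Matrix.sum_apply, Fintype.sum_prod_type]
  simp only [hZ]
  have h1 : ∀ k0 : Fin mI, ∀ s : Fin (T-1),
      (if (k, e).1 = (k0, s).1 ∧ (t:ℕ) = ((k0,s).2:ℕ) + ((k,e).2:ℕ) + 1 then (1:ℝ) else 0)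
      = if k = k0 then (if (t:ℕ) = (s:ℕ) + (e:ℕ) + 1 then (1:ℝ) else 0) else 0 := by
    intro k0 s
    by_cases h : k = k0 <;> simp [h]
  rw [Finset.sum_congr rfl (fun k0 _ => Finset.sum_congr rfl (fun s _ => h1 k0 s))]
  rw [Finset.sum_comm]
  have h2 : ∀ s : Fin (T-1),
      (∑ k0 : Fin mI, if k = k0 then (if (t:ℕ) = (s:ℕ) + (e:ℕ) + 1 then (1:ℝ) else 0) else 0)
      = if (t:ℕ) = (s:ℕ) + (e:ℕ) + 1 then (1:ℝ) else 0 := by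
    intro s
    rw [Finset.sum_ite_eq Finset.univ k]
    simp only [Finset.mem_univ, if_true]
  rw [Finset.sum_congr rfl (fun s _ => h2 s)]
  rw [Fin.sum_univ_eq_sum_range (fun s => if (t:ℕ) = s + (e:ℕ) + 1 then (1:ℝ) else 0) (T-1)]
  by_cases h : (e:ℕ) + 1 ≤ (t:ℕ)
  · rw [if_pos h]
    rw [Finset.sum_eq_single_of_mem ((t:ℕ) - (e:ℕ) - 1)]
    · have : (t:ℕ) = ((t:ℕ) - (e:ℕ) - 1) + (e:ℕ) + 1 := by omega
      rw [if_pos this]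
    · have ht := t.isLt
      simp only [Finset.mem_range]
      omega
    · intro x _ hx
      have : ¬((t:ℕ) = x + (e:ℕ) + 1) := by omega
      rw [if_neg this]
  · rw [if_neg h]
    apply Finset.sum_eq_zero
    intro x _
    have : ¬((t:ℕ) = x + (e:ℕ) + 1) := by omega
    rw [if_neg this]

lemma aux_XVZ (T mI : ℕ) (hT : 3 ≤ T) (a b : ℝ)
    (X : Fin mI × Fin (T - 1) → Matrix (Fin T) (Fin mI) ℝ)
    (hX : ∀ i j k, X i j k = if k = i.1 ∧ (i.2 : ℕ) + 1 ≤ (j : ℕ) then 1 else 0)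
    (Z : Fin mI × Fin (T - 1) → Matrix (Fin T) (Fin mI × Fin (T - 1)) ℝ)
    (hZ : ∀ i j ke, Z i j ke = if ke.1 = i.1 ∧ (j : ℕ) = (i.2 : ℕ) + (ke.2 : ℕ) + 1 then 1 else 0)
    (W : Matrix (Fin T) (Fin T) ℝ)
    (hW : ∀ t t', W t t' = a⁻¹ * ((if t = t' then (1:ℝ) else 0) - b))
    (k k' : Fin mI) (e : Fin (T-1)) :
    (∑ i, (X i)ᵀ * W * Z i) k (k', e)
      = if k = k' then
          a⁻¹ * (((T:ℝ)-1-(e:ℕ)) - b * ((T:ℝ)-1-(e:ℕ)) * ((T:ℝ)+(e:ℕ)) / 2) else 0 := by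
  have he : (e:ℕ) + 1 ≤ T - 1 := e.isLt
  have hterm : ∀ i : Fin mI × Fin (T-1),
      ((X i)ᵀ * W * Z i) k (k', e)
        = if k = i.1 ∧ k' = i.1 then
            (if (i.2:ℕ) + 1 ≤ T - 1 - (e:ℕ) then
              a⁻¹ * (1 - b * ((T:ℝ) - ((i.2:ℕ)+1:ℕ))) else 0) else 0 := by
    intro i
    obtain ⟨k0, s⟩ := i
    rw [Matrix.mul_apply]
    have row := aux_XW_row T mI a b X hX W hW k0 s k
    by_cases hk : k = k0
    · by_cases hk' : k' = k0
      · rw [if_pos (show k = k0 ∧ k' = k0 from ⟨hk, hk'⟩)]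
        have step : ∀ t' : Fin T,
            ((X (k0,s))ᵀ * W) k t' * Z (k0,s) t' (k', e)
            = if (t':ℕ) = (s:ℕ) + (e:ℕ) + 1 then
                a⁻¹ * ((if (s:ℕ)+1 ≤ (t':ℕ) then (1:ℝ) else 0) - b * ((T:ℝ) - ((s:ℕ)+1:ℕ)))
              else 0 := by
          intro t'
          rw [row t', hZ]
          simp only [hk, hk', and_self, if_pos rfl, ite_true]
          by_cases h : (t':ℕ) = (s:ℕ) + (e:ℕ) + 1 <;> simp [h, hk']
        rw [Finset.sum_congr rfl (fun t' _ => step t'),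
          fin_delta_nat T ((s:ℕ) + (e:ℕ) + 1)
            (fun u => a⁻¹ * ((if (s:ℕ)+1 ≤ u then (1:ℝ) else 0) - b * ((T:ℝ) - ((s:ℕ)+1:ℕ))))]
        have h1 : (s:ℕ)+1 ≤ (s:ℕ) + (e:ℕ) + 1 := by omega
        have h2 : ((s:ℕ) + (e:ℕ) + 1 < T) ↔ ((s:ℕ) + 1 ≤ T - 1 - (e:ℕ)) := by omega
        by_cases h3 : (s:ℕ) + (e:ℕ) + 1 < T
        · rw [if_pos h3, if_pos (h2.mp h3), if_pos h1]
        · rw [if_neg h3, if_neg (fun hh => h3 (h2.mpr hh))]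
      · have : ¬(k = k0 ∧ k' = k0) := by tauto
        rw [if_neg this]
        apply Finset.sum_eq_zero
        intro t' _
        rw [hZ]
        simp [hk']
    · have : ¬(k = k0 ∧ k' = k0) := by tauto
      rw [if_neg this]
      apply Finset.sum_eq_zero
      intro t' _
      rw [row t', if_neg hk, zero_mul]
  rw [Matrix.sum_apply, Finset.sum_congr rfl (fun i _ => hterm i), Fintype.sum_prod_type]
  by_cases hkk : k = k'
  · subst hkk
    simp only [and_self, if_pos rfl, ite_true]
    rw [Finset.sum_comm]
    have inner : ∀ s : Fin (T-1),
        (∑ k0 : Fin mI, if k = k0 then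
            (if (s:ℕ) + 1 ≤ T - 1 - (e:ℕ) then
              a⁻¹ * (1 - b * ((T:ℝ) - ((s:ℕ)+1:ℕ))) else 0) else 0)
        = if (s:ℕ) + 1 ≤ T - 1 - (e:ℕ) then
            (a⁻¹ * (1 - b*(T:ℝ) + b) + (a⁻¹ * b) * ((s:ℕ):ℝ)) else 0 := by
      intro s
      rw [Finset.sum_ite_eq Finset.univ k]
      simp only [Finset.mem_univ, if_true]
      by_cases h : (s:ℕ) + 1 ≤ T - 1 - (e:ℕ)
      · rw [if_pos h, if_pos h]; push_cast; ring
      · rw [if_neg h, if_neg h]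
    rw [Finset.sum_congr rfl (fun s _ => inner s),
      fin_sum_ite_add_one_le (T-1) (T - 1 - (e:ℕ))
        (fun s => a⁻¹ * (1 - b*(T:ℝ) + b) + (a⁻¹ * b) * ((s:ℕ):ℝ))]
    have hmin : min (T - 1 - (e:ℕ)) (T-1) = T - 1 - (e:ℕ) := by omega
    rw [hmin, Finset.sum_add_distrib, Finset.sum_const, Finset.card_range, ← Finset.mul_sum,
      nsmul_eq_mul, sum_range_cast]
    have hcast : ((T - 1 - (e:ℕ) : ℕ) : ℝ) = (T:ℝ) - 1 - ((e:ℕ):ℝ) := by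
      have h1 : (e:ℕ) + 1 ≤ T := by omega
      have h2 : T - 1 - (e:ℕ) = T - ((e:ℕ) + 1) := by omega
      rw [h2, Nat.cast_sub h1]; push_cast; ring
    rw [hcast]
    ring
  · simp only [hkk, if_false]
    apply Finset.sum_eq_zero
    intro k0 _
    apply Finset.sum_eq_zero
    intro s _
    have : ¬ (k = k0 ∧ k' = k0) := by
      rintro ⟨rfl, rfl⟩; exact hkk rfl
    simp [this]

lemma IJ_mul (N : ℕ) (α β α' β' : ℝ) :
    ((α • (1 : Matrix (Fin N) (Fin N) ℝ) + β • Matrix.of (fun _ _ => (1:ℝ)))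
      * (α' • (1 : Matrix (Fin N) (Fin N) ℝ) + β' • Matrix.of (fun _ _ => (1:ℝ))))
    = (α*α') • (1 : Matrix (Fin N) (Fin N) ℝ)
      + (α*β' + β*α' + (N:ℝ)*β*β') • Matrix.of (fun _ _ => (1:ℝ)) := by
  ext i j
  simp only [Matrix.mul_apply, Matrix.add_apply, Matrix.smul_apply, Matrix.one_apply,
    Matrix.of_apply, smul_eq_mul, mul_one]
  have step : ∀ t : Fin N,
      (α * (if i = t then (1:ℝ) else 0) + β) * (α' * (if t = j then (1:ℝ) else 0) + β')
      = (if i = t then α * (α' * (if t = j then (1:ℝ) else 0) + β') else 0)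
        + β * α' * (if t = j then (1:ℝ) else 0) + β * β' := by
    intro t
    by_cases h2 : t = j
    · subst h2; by_cases h1 : i = t <;> simp [h1] <;> ring
    · by_cases h1 : i = t <;> simp [h1, h2] <;> ring
  rw [Finset.sum_congr rfl (fun t _ => step t)]
  simp only [Finset.sum_add_distrib, ← Finset.mul_sum, Finset.sum_ite_eq, Finset.sum_ite_eq',
    Finset.mem_univ, if_true, Finset.sum_const, Finset.card_univ, Fintype.card_fin,
    nsmul_eq_mul]
  by_cases h : i = j <;> simp [h] <;> ring

lemma aux_XVX (T mI : ℕ) (hT : 3 ≤ T) (a b : ℝ)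
    (X : Fin mI × Fin (T - 1) → Matrix (Fin T) (Fin mI) ℝ)
    (hX : ∀ i j k, X i j k = if k = i.1 ∧ (i.2 : ℕ) + 1 ≤ (j : ℕ) then 1 else 0)
    (W : Matrix (Fin T) (Fin T) ℝ)
    (hW : ∀ t t', W t t' = a⁻¹ * ((if t = t' then (1:ℝ) else 0) - b)) (k k' : Fin mI) :
    (∑ i, (X i)ᵀ * W * X i) k k'
      = if k = k' then
          a⁻¹ * ((T:ℝ)*((T:ℝ)-1)/2 - b*(T:ℝ)*((T:ℝ)-1)*(2*(T:ℝ)-1)/6) else 0 := by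
  have hterm : ∀ i : Fin mI × Fin (T-1),
      ((X i)ᵀ * W * X i) k k'
        = if k = i.1 ∧ k' = i.1 then
            a⁻¹ * (((T:ℝ) - ((i.2:ℕ)+1:ℕ)) - b * ((T:ℝ) - ((i.2:ℕ)+1:ℕ))^2) else 0 := by
    intro i
    obtain ⟨k0, s⟩ := i
    have hs : (s:ℕ) + 1 ≤ T := by have := s.isLt; omega
    rw [Matrix.mul_apply]
    have hinner : ∀ t' : Fin T, ((X (k0,s))ᵀ * W) k t'
        = if k = k0 then
            a⁻¹ * ((if (s:ℕ)+1 ≤ (t':ℕ) then (1:ℝ) else 0) - b * ((T:ℝ) - ((s:ℕ)+1:ℕ))) else 0 := by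
      intro t'
      rw [Matrix.mul_apply]
      simp only [Matrix.transpose_apply, hX, hW]
      by_cases hk : k = k0
      · have step : ∀ t : Fin T,
            (if k = k0 ∧ (s:ℕ) + 1 ≤ (t:ℕ) then (1:ℝ) else 0) *
              (a⁻¹ * ((if t = t' then (1:ℝ) else 0) - b))
            = a⁻¹ * ((if (t:ℕ) = (t':ℕ) then (if (s:ℕ)+1 ≤ (t:ℕ) then (1:ℝ) else 0) else 0)
              - b * (if (s:ℕ)+1 ≤ (t:ℕ) then (1:ℝ) else 0)) := by
          intro t
          by_cases h2 : t = t'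
          · subst h2
            by_cases h1 : (s:ℕ)+1 ≤ (t:ℕ) <;> simp [h1, hk] <;> ring
          · have h2' : ¬((t:ℕ) = (t':ℕ)) := fun h => h2 (Fin.ext h)
            by_cases h1 : (s:ℕ)+1 ≤ (t:ℕ) <;> simp [h1, h2, h2', hk] <;> ring
        rw [Finset.sum_congr rfl (fun t _ => step t), ← Finset.mul_sum, Finset.sum_sub_distrib,
          fin_delta_nat T (t':ℕ) (fun u => if (s:ℕ)+1 ≤ u then (1:ℝ) else 0),
          ← Finset.mul_sum, ind_count T ((s:ℕ)+1) hs]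
        have ht' : (t':ℕ) < T := t'.isLt
        simp only [ht', if_true, hk]
        try push_cast
        try ring
      · simp [hk]
    rw [Finset.sum_congr rfl (fun t' _ => by rw [hinner t', hX])]
    by_cases hk : k = k0
    · by_cases hk' : k' = k0
      · simp only [hk, hk', and_self, if_true, ite_true, true_and, if_pos rfl]
        have step : ∀ t' : Fin T,
            (a⁻¹ * ((if (s:ℕ)+1 ≤ (t':ℕ) then (1:ℝ) else 0) - b * ((T:ℝ) - ((s:ℕ)+1:ℕ)))) *
              (if (s:ℕ)+1 ≤ (t':ℕ) then (1:ℝ) else 0)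
            = if (s:ℕ)+1 ≤ (t':ℕ) then a⁻¹ * (1 - b * ((T:ℝ) - ((s:ℕ)+1:ℕ))) else 0 := by
          intro t'
          by_cases h1 : (s:ℕ)+1 ≤ (t':ℕ) <;> simp [h1] <;> ring
        rw [Finset.sum_congr rfl (fun t' _ => step t'),
          fin_sum_ite_le T ((s:ℕ)+1) (fun _ => a⁻¹ * (1 - b * ((T:ℝ) - ((s:ℕ)+1:ℕ)))),
          Finset.sum_const, Nat.card_Ico, nsmul_eq_mul]
        have hcast : ((T - ((s:ℕ)+1) : ℕ) : ℝ) = (T:ℝ) - ((s:ℕ)+1:ℕ) := by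
          push_cast [hs]; ring
        rw [hcast]
        push_cast
        ring
      · have : ¬(k = k0 ∧ k' = k0) := by tauto
        simp [hk, hk', this]
    · have : ¬(k = k0 ∧ k' = k0) := by tauto
      simp [hk, this]
  rw [Matrix.sum_apply, Finset.sum_congr rfl (fun i _ => hterm i), Fintype.sum_prod_type]
  by_cases hkk : k = k'
  · subst hkk
    simp only [and_self, if_pos rfl, ite_true]
    rw [Finset.sum_comm]
    have inner : ∀ s : Fin (T-1),
        (∑ k0 : Fin mI, if k = k0 then
            a⁻¹ * (((T:ℝ) - ((s:ℕ)+1:ℕ)) - b * ((T:ℝ) - ((s:ℕ)+1:ℕ))^2) else 0)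
        = a⁻¹ * (((T:ℝ)-1) - b*((T:ℝ)-1)^2)
          + (a⁻¹ * (2*b*((T:ℝ)-1) - 1)) * ((s:ℕ):ℝ) + (-(a⁻¹*b)) * ((s:ℕ):ℝ)^2 := by
      intro s
      rw [Finset.sum_ite_eq Finset.univ k]
      simp only [Finset.mem_univ, if_true]
      push_cast
      ring
    rw [Finset.sum_congr rfl (fun s _ => inner s), fin_sum_poly]
    have hc1 : ((T - 1 : ℕ) : ℝ) = (T:ℝ) - 1 := by
      have h1 : (1:ℕ) ≤ T := by omega
      push_cast [h1]; ring
    rw [hc1]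
    ring
  · simp only [hkk, if_false]
    apply Finset.sum_eq_zero
    intro k0 _
    apply Finset.sum_eq_zero
    intro s _
    have : ¬ (k = k0 ∧ k' = k0) := by
      rintro ⟨rfl, rfl⟩; exact hkk rfl
    simp [this]

set_option maxHeartbeats 2000000 in
/-- Equation (8): under the concurrent design of Proposition 1, the expected
constant-effect estimator for intervention `k` satisfies
`E(θ̂ₖ) = (1/c)·r′δₖ + (1/g)·((d/c)·r′ − v′)·δ₊` with `δ₊ = Σₖ δₖ`. -/
theorem concurrent_expected_constant_effect_estimator
    (T mI : ℕ) (hT : 3 ≤ T) (hm : 1 ≤ mI)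
    (salpha seps n : ℝ) (hsalpha : 0 ≤ salpha) (hseps : 0 < seps) (hn : 0 < n)
    (b c d g : ℝ)
    (hb : b = salpha / ((T : ℝ) * salpha + seps / n))
    (hc : c = (T : ℝ) * ((T : ℝ) - 1) * (3 + b - 2 * b * (T : ℝ)) / 6)
    (hd : d = (T : ℝ) * (4 * (T : ℝ) - 2 - 3 * b * (T : ℝ) * ((T : ℝ) - 1)) / (12 * (mI : ℝ)))
    (hg : g = (T : ℝ) * ((T : ℝ) - 2) * (2 + b - b * (T : ℝ)) / 12)
    (hc0 : c ≠ 0) (hg0 : g ≠ 0)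
    (r v : Fin (T - 1) → ℝ)
    (hr : ∀ j : Fin (T - 1),
      r j = ((T : ℝ) - ((j : ℕ) + 1 : ℕ)) * (1 + b * (1 - (T : ℝ) - ((j : ℕ) + 1 : ℕ)) / 2))
    (hv : ∀ j : Fin (T - 1),
      v j = ((T : ℝ) - ((j : ℕ) + 1 : ℕ))
        * (1 - b * (T : ℝ) + ((j : ℕ) + 1 : ℕ) / ((T : ℝ) - 1)) / (2 * (mI : ℝ)))
    -- common covariance matrix Σ = σα²J + (σε²/n)I
    (V : Matrix (Fin T) (Fin T) ℝ)
    (hV : V = salpha • (Matrix.of fun _ _ => (1 : ℝ)) + (seps / n) • 1)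
    -- constant-effect working design matrices
    (X : Fin mI × Fin (T - 1) → Matrix (Fin T) (Fin mI) ℝ)
    (hX : ∀ i j k, X i j k = if k = i.1 ∧ (i.2 : ℕ) + 1 ≤ (j : ℕ) then 1 else 0)
    -- true exposure-time indicator matrices
    (Z : Fin mI × Fin (T - 1) → Matrix (Fin T) (Fin mI × Fin (T - 1)) ℝ)
    (hZ : ∀ i j ke, Z i j ke = if ke.1 = i.1 ∧ (j : ℕ) = (i.2 : ℕ) + (ke.2 : ℕ) + 1 then 1 else 0)
    -- the weight matrix H from Theorem 1
    (S : Matrix (Fin mI) (Fin T) ℝ) (hS : S = ∑ i, (X i)ᵀ * V⁻¹)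
    (AW : Matrix (Fin mI) (Fin mI) ℝ)
    (hAW : AW = (∑ i, (X i)ᵀ * V⁻¹ * X i)
        - S * (((mI * (T - 1) : ℕ) : ℝ)⁻¹ • ∑ i, X i))
    (H : Matrix (Fin mI) (Fin mI × Fin (T - 1)) ℝ)
    (hH : H = AW⁻¹ * ((∑ i, (X i)ᵀ * V⁻¹ * Z i)
        - S * (((mI * (T - 1) : ℕ) : ℝ)⁻¹ • ∑ i, Z i)))
    -- true exposure-time-specific effects; by Theorem 1, E(θ̂) = H·δ
    (δ : Fin mI × Fin (T - 1) → ℝ)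
    (Eθ : Fin mI → ℝ) (hEθ : Eθ = H *ᵥ δ) :
    ∀ k : Fin mI,
      Eθ k = (1 / c) * (∑ e, r e * δ (k, e))
        + (1 / g) * (∑ e, ((d / c) * r e - v e) * (∑ k', δ (k', e))) := by
  intro k
  have hm0 : (mI:ℝ) ≠ 0 := Nat.cast_ne_zero.mpr (by omega)
  have hT3 : (3:ℝ) ≤ (T:ℝ) := by exact_mod_cast hT
  have hT1 : ((T - 1 : ℕ) : ℝ) = (T:ℝ) - 1 := by
    have h1 : (1:ℕ) ≤ T := by omega
    push_cast [h1]; ring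
  have hT1' : (T:ℝ) - 1 ≠ 0 := by nlinarith
  obtain ⟨a, haDef⟩ : ∃ a : ℝ, seps / n = a := ⟨_, rfl⟩
  rw [haDef] at hb hV
  have hapos : 0 < a := haDef ▸ div_pos hseps hn
  have ha0 : a ≠ 0 := ne_of_gt hapos
  have hden : 0 < (T : ℝ) * salpha + a := by nlinarith
  have hb' : salpha = b * ((T:ℝ) * salpha + a) := by
    rw [hb]; field_simp
  have hVinv : V⁻¹ = a⁻¹ • ((1 : Matrix (Fin T) (Fin T) ℝ) - b • Matrix.of fun _ _ => (1:ℝ)) := by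
    rw [hV]; exact inv_J_add_smul T salpha a b ha0 hb'
  have hW : ∀ t t' : Fin T, V⁻¹ t t' = a⁻¹ * ((if t = t' then (1:ℝ) else 0) - b) := by
    intro t t'
    rw [hVinv]
    by_cases h : t = t' <;>
      simp [Matrix.smul_apply, Matrix.sub_apply, Matrix.one_apply, Matrix.of_apply, h]
  have hgcd : g = c - (mI:ℝ) * d := by
    rw [hg, hc, hd]; field_simp; ring
  have hκ : ((mI * (T - 1) : ℕ) : ℝ) = (mI:ℝ) * ((T:ℝ) - 1) := by
    rw [Nat.cast_mul, hT1]
  -- AW entries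
  have hAWe : ∀ k1 k2 : Fin mI, AW k1 k2 = a⁻¹ * ((if k1 = k2 then c else 0) - d) := by
    intro k1 k2
    rw [hAW, Matrix.sub_apply, aux_XVX T mI hT a b X hX V⁻¹ hW k1 k2]
    have h2 : (S * (((mI * (T - 1) : ℕ) : ℝ)⁻¹ • ∑ i, X i)) k1 k2
        = ((mI:ℝ) * ((T:ℝ)-1))⁻¹ * a⁻¹ *
          ((T:ℝ)*((T:ℝ)-1)*(2*(T:ℝ)-1)/6
            - b*(T:ℝ)*((T:ℝ)-1)/2 * ((T:ℝ)*((T:ℝ)-1)/2)) := by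
      rw [Matrix.mul_apply]
      have step : ∀ t : Fin T,
          S k1 t * ((((mI * (T - 1) : ℕ) : ℝ)⁻¹ • ∑ i, X i) t k2)
          = 0 + (((mI:ℝ) * ((T:ℝ)-1))⁻¹ * a⁻¹ * (- (b*(T:ℝ)*((T:ℝ)-1)/2))) * ((t:ℕ):ℝ)
            + (((mI:ℝ) * ((T:ℝ)-1))⁻¹ * a⁻¹) * ((t:ℕ):ℝ)^2 := by
        intro t
        rw [hS, aux_S T mI hT a b X hX V⁻¹ hW k1 t, Matrix.smul_apply,
          aux_sumX T mI X hX t k2, hκ, smul_eq_mul]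
        ring
      rw [Finset.sum_congr rfl (fun t _ => step t), fin_sum_poly]
      ring
    rw [h2, hc, hd]
    by_cases h : k1 = k2 <;>
      simp only [h, if_true, if_false, ite_true, ite_false] <;>
      field_simp <;> ring
  have hAWM : AW = (a⁻¹*c) • (1 : Matrix (Fin mI) (Fin mI) ℝ)
      + (-(a⁻¹*d)) • Matrix.of (fun _ _ => (1:ℝ)) := by
    ext k1 k2
    rw [hAWe k1 k2]
    by_cases h : k1 = k2 <;>
      simp [Matrix.add_apply, Matrix.smul_apply, Matrix.one_apply, Matrix.of_apply, h] <;> ring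
  have hABone : AW * ((a*c⁻¹) • (1 : Matrix (Fin mI) (Fin mI) ℝ)
      + (a*d/(c*g)) • Matrix.of (fun _ _ => (1:ℝ))) = 1 := by
    rw [hAWM, IJ_mul]
    have e1 : (a⁻¹*c)*(a*c⁻¹) = 1 := by field_simp
    have e2 : (a⁻¹*c)*(a*d/(c*g)) + (-(a⁻¹*d))*(a*c⁻¹) + (mI:ℝ)*(-(a⁻¹*d))*(a*d/(c*g)) = 0 := by
      have t1 : (a⁻¹*c)*(a*d/(c*g)) = d/g := by field_simp
      have t2 : (-(a⁻¹*d))*(a*c⁻¹) = -(d/c) := by field_simp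
      have t3 : (mI:ℝ)*(-(a⁻¹*d))*(a*d/(c*g)) = -((mI:ℝ)*d*d/(c*g)) := by field_simp
      rw [t1, t2, t3]
      field_simp
      linear_combination (-d) * hgcd
    rw [e1, e2]
    simp
  have hAWinv : AW⁻¹ = (a*c⁻¹) • (1 : Matrix (Fin mI) (Fin mI) ℝ)
      + (a*d/(c*g)) • Matrix.of (fun _ _ => (1:ℝ)) := Matrix.inv_eq_right_inv hABone
  have hAWinve : ∀ k1 k2 : Fin mI,
      AW⁻¹ k1 k2 = (a/c) * (if k1 = k2 then (1:ℝ) else 0) + a*d/(c*g) := by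
    intro k1 k2
    rw [hAWinv]
    by_cases h : k1 = k2 <;>
      simp [Matrix.add_apply, Matrix.smul_apply, Matrix.one_apply, Matrix.of_apply, h,
        div_eq_mul_inv]
  -- entries of the M matrix
  have hMe : ∀ (k2 k' : Fin mI) (e : Fin (T-1)),
      ((∑ i, (X i)ᵀ * V⁻¹ * Z i) - S * (((mI * (T - 1) : ℕ) : ℝ)⁻¹ • ∑ i, Z i)) k2 (k', e)
      = a⁻¹ * ((if k2 = k' then (1:ℝ) else 0) * r e - v e) := by
    intro k2 k' e
    have he1 : (e:ℕ) + 1 ≤ T := by have := e.isLt; omega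
    have he2 : (e:ℕ) + 1 ≤ T - 1 := e.isLt
    rw [Matrix.sub_apply, aux_XVZ T mI hT a b X hX Z hZ V⁻¹ hW k2 k' e]
    have h2 : (S * (((mI * (T - 1) : ℕ) : ℝ)⁻¹ • ∑ i, Z i)) k2 (k', e)
        = ((mI:ℝ) * ((T:ℝ)-1))⁻¹ * a⁻¹ *
          (((T:ℝ)*((T:ℝ)-1)/2 - ((e:ℕ):ℝ)*(((e:ℕ):ℝ)+1)/2)
            - b*(T:ℝ)*((T:ℝ)-1)/2 * ((T:ℝ) - (((e:ℕ):ℝ)+1))) := by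
      rw [Matrix.mul_apply]
      have step : ∀ t : Fin T,
          S k2 t * ((((mI * (T - 1) : ℕ) : ℝ)⁻¹ • ∑ i, Z i) t (k', e))
          = if (e:ℕ) + 1 ≤ (t:ℕ) then
              (((mI:ℝ) * ((T:ℝ)-1))⁻¹ * a⁻¹ * (- (b*(T:ℝ)*((T:ℝ)-1)/2)))
                + (((mI:ℝ) * ((T:ℝ)-1))⁻¹ * a⁻¹) * ((t:ℕ):ℝ) else 0 := by
        intro t
        rw [hS, aux_S T mI hT a b X hX V⁻¹ hW k2 t, Matrix.smul_apply,
          aux_sumZ T mI hT Z hZ t k' e, hκ, smul_eq_mul]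
        by_cases h : (e:ℕ) + 1 ≤ (t:ℕ) <;> simp [h] <;> ring
      rw [Finset.sum_congr rfl (fun t _ => step t),
        fin_sum_ite_le T ((e:ℕ)+1)
          (fun u => (((mI:ℝ) * ((T:ℝ)-1))⁻¹ * a⁻¹ * (- (b*(T:ℝ)*((T:ℝ)-1)/2)))
            + (((mI:ℝ) * ((T:ℝ)-1))⁻¹ * a⁻¹) * ((u:ℕ):ℝ)),
        Finset.sum_add_distrib, Finset.sum_const, Nat.card_Ico, ← Finset.mul_sum,
        sum_Ico_cast_id ((e:ℕ)+1) T he1, nsmul_eq_mul]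
      have hcast : ((T - ((e:ℕ)+1) : ℕ) : ℝ) = (T:ℝ) - (((e:ℕ):ℝ)+1) := by
        rw [Nat.cast_sub he1]; push_cast; ring
      rw [hcast]
      push_cast
      ring
    rw [h2, hr e, hv e]
    push_cast
    by_cases h : k2 = k' <;>
      simp only [h, if_true, if_false, ite_true, ite_false, one_mul, zero_mul] <;>
      field_simp <;> ring
  -- entries of H (row k)
  have hHe : ∀ (k' : Fin mI) (e : Fin (T-1)),
      H k (k', e) = (1/c) * ((if k = k' then (1:ℝ) else 0) * r e - v e)
        + (d/(c*g)) * (r e - (mI:ℝ) * v e) := by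
    intro k' e
    rw [hH, Matrix.mul_apply]
    have step : ∀ k2 : Fin mI,
        AW⁻¹ k k2 * ((∑ i, (X i)ᵀ * V⁻¹ * Z i)
            - S * (((mI * (T - 1) : ℕ) : ℝ)⁻¹ • ∑ i, Z i)) k2 (k', e)
        = (if k = k2 then (1/c) * ((if k2 = k' then (1:ℝ) else 0) * r e - v e) else 0)
          + (d/(c*g)) * ((if k2 = k' then (1:ℝ) else 0) * r e - v e) := by
      intro k2
      rw [hAWinve k k2, hMe k2 k' e]
      by_cases h1 : k = k2 <;> simp only [h1, if_true, if_false, ite_true, ite_false] <;>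
        field_simp <;> ring
    rw [Finset.sum_congr rfl (fun k2 _ => step k2), Finset.sum_add_distrib,
      Finset.sum_ite_eq Finset.univ k, ← Finset.mul_sum]
    simp only [Finset.mem_univ, if_true]
    have h3 : (∑ k2 : Fin mI, ((if k2 = k' then (1:ℝ) else 0) * r e - v e))
        = r e - (mI:ℝ) * v e := by
      rw [Finset.sum_sub_distrib]
      have : ∀ k2 : Fin mI, (if k2 = k' then (1:ℝ) else 0) * r e
          = if k2 = k' then r e else 0 := by
        intro k2; by_cases h : k2 = k' <;> simp [h]
      rw [Finset.sum_congr rfl (fun k2 _ => this k2), Finset.sum_ite_eq' Finset.univ k',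
        Finset.sum_const, Finset.card_univ, Fintype.card_fin, nsmul_eq_mul]
      simp
    rw [h3]
  -- assemble
  rw [hEθ]
  have hmv : (H *ᵥ δ) k = ∑ p : Fin mI × Fin (T-1), H k p * δ p := by
    simp [Matrix.mulVec, dotProduct]
  rw [hmv, Fintype.sum_prod_type]
  have step2 : ∀ (k' : Fin mI) (e : Fin (T-1)),
      H k (k', e) * δ (k', e)
      = (if k = k' then (1/c) * r e * δ (k', e) else 0)
        + (-(1/c) * v e + (d/(c*g)) * (r e - (mI:ℝ) * v e)) * δ (k', e) := by
    intro k' e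
    rw [hHe k' e]
    by_cases h : k = k' <;> simp only [h, if_true, if_false, ite_true, ite_false] <;> ring
  rw [Finset.sum_congr rfl (fun k' _ => Finset.sum_congr rfl (fun e _ => step2 k' e))]
  rw [Finset.sum_comm]
  have inner2 : ∀ e : Fin (T-1),
      (∑ k' : Fin mI, ((if k = k' then (1/c) * r e * δ (k', e) else 0)
        + (-(1/c) * v e + (d/(c*g)) * (r e - (mI:ℝ) * v e)) * δ (k', e)))
      = (1/c) * (r e * δ (k, e))
        + (1/g) * (((d/c) * r e - v e) * (∑ k' : Fin mI, δ (k', e))) := by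
    intro e
    rw [Finset.sum_add_distrib, Finset.sum_ite_eq Finset.univ k, ← Finset.mul_sum]
    simp only [Finset.mem_univ, if_true]
    have hu : (-(1/c) * v e + (d/(c*g)) * (r e - (mI:ℝ) * v e))
        = (1/g) * ((d/c) * r e - v e) := by
      field_simp
      linear_combination (-(v e)) * hgcd
    rw [hu]
    ring
  rw [Finset.sum_congr rfl (fun e _ => inner2 e), Finset.sum_add_distrib,
    ← Finset.mul_sum, ← Finset.mul_sum]
end

section
/- In a concurrent stepped-wedge design with a single intervention (m = 1), the expectation of the constant-effect GLS estimator is E(θ̂) = 6·Σ_{j=1}^{T−1} wⱼδⱼ / [T(T−1)(T−2)(2 + b − bT)], where wⱼ = (T−j)[(b − 1 − bT)j + (1+b)(T−1)] and b = σα²/(Tσα² + σε²/n). -/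
open Matrix

section swHelpers

lemma sum_range_ite_lt {n a : ℕ} (ha : a ≤ n) (f : ℕ → ℝ) :
    ∑ k ∈ Finset.range n, (if k < a then f k else 0) = ∑ k ∈ Finset.range a, f k := by
  rw [← Finset.sum_subset (Finset.range_subset_range.2 ha)]
  · exact Finset.sum_congr rfl fun k hk => if_pos (Finset.mem_range.1 hk)
  · intro k _ hk
    exact if_neg (by simpa using hk)

lemma sum_range_ite_le {n a : ℕ} (ha : a ≤ n) (f : ℕ → ℝ) :
    ∑ k ∈ Finset.range n, (if a ≤ k then f k else 0)
      = ∑ k ∈ Finset.range n, f k - ∑ k ∈ Finset.range a, f k := by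
  rw [← sum_range_ite_lt ha f, ← Finset.sum_sub_distrib]
  exact Finset.sum_congr rfl fun k _ => by split_ifs with h1 h2 <;> [omega; ring; ring; omega]

lemma sum_fin_ite_le {T a : ℕ} (ha : a ≤ T) (f : ℕ → ℝ) :
    ∑ k : Fin T, (if a ≤ (k:ℕ) then f k else 0)
      = ∑ k ∈ Finset.range T, f k - ∑ k ∈ Finset.range a, f k := by
  rw [Fin.sum_univ_eq_sum_range (fun k => if a ≤ k then f k else 0)]
  exact sum_range_ite_le ha f

lemma count_range_le {m v : ℕ} (hv : v ≤ m) (c : ℝ) :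
    ∑ i ∈ Finset.range m, (if i+1 ≤ v then c else 0) = (v:ℝ) * c := by
  have h : ∀ i ∈ Finset.range m, (if i+1 ≤ v then c else 0) = (if i < v then c else 0) :=
    fun i _ => if_congr (by omega) rfl rfl
  rw [Finset.sum_congr rfl h, sum_range_ite_lt hv, Finset.sum_const]
  simp [mul_comm]

lemma sum_fin_pick {n v : ℕ} (f : ℕ → ℝ) :
    ∑ k : Fin n, (if (k:ℕ) = v then f k else 0) = if v < n then f v else 0 := by
  rw [Fin.sum_univ_eq_sum_range (fun k => if k = v then f k else 0)]
  rw [Finset.sum_ite_eq' (Finset.range n) v f]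
  simp [Finset.mem_range]

lemma count_fin_ge {T a : ℕ} (ha : a ≤ T) :
    ∑ k : Fin T, (if a ≤ (k:ℕ) then (1:ℝ) else 0) = (T:ℝ) - a := by
  rw [sum_fin_ite_le ha (fun _ => (1:ℝ))]
  simp

lemma swInner {T : ℕ} (a : ℕ) (ha : a ≤ T) (j : Fin T) (s b : ℝ) :
    ∑ k : Fin T, (if a ≤ (k:ℕ) then (1:ℝ) else 0) * (s * ((if k = j then (1:ℝ) else 0) - b))
      = s * ((if a ≤ (j:ℕ) then (1:ℝ) else 0) - b * ((T:ℝ) - a)) := by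
  have step : ∀ k : Fin T,
      (if a ≤ (k:ℕ) then (1:ℝ) else 0) * (s * ((if k = j then (1:ℝ) else 0) - b))
        = (if k = j then (if a ≤ (k:ℕ) then s else 0) else 0)
          - (if a ≤ (k:ℕ) then s*b else 0) := by
    intro k; split_ifs <;> ring
  rw [Finset.sum_congr rfl fun k _ => step k, Finset.sum_sub_distrib,
    Finset.sum_ite_eq' Finset.univ j (fun k => if a ≤ (k:ℕ) then s else 0)]
  have : ∑ k : Fin T, (if a ≤ (k:ℕ) then s*b else 0) = s*b*((T:ℝ)-a) := by
    rw [sum_fin_ite_le ha (fun _ => s*b)]; simp [mul_comm]; ring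
  rw [this]
  simp only [Finset.mem_univ, if_true]
  split_ifs <;> ring

lemma swVinv {T : ℕ} (salpha s b : ℝ) (hs : s ≠ 0) (hD : (T:ℝ)*salpha + s ≠ 0)
    (hb : b = salpha / ((T:ℝ)*salpha + s)) :
    (salpha • (Matrix.of fun _ _ => (1:ℝ)) + s • (1 : Matrix (Fin T) (Fin T) ℝ))⁻¹
      = Matrix.of (fun k j => s⁻¹ * ((if k = j then (1:ℝ) else 0) - b)) := by
  apply Matrix.inv_eq_right_inv
  ext i j
  simp only [Matrix.mul_apply, Matrix.add_apply, Matrix.smul_apply, Matrix.one_apply,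
    Matrix.of_apply, smul_eq_mul]
  have step : ∀ k : Fin T,
      (salpha * 1 + s * (if i = k then (1:ℝ) else 0)) * (s⁻¹ * ((if k = j then (1:ℝ) else 0) - b))
        = (if k = j then (salpha*s⁻¹ + (if i = k then s*s⁻¹ else 0)) else 0)
          + (- (salpha*s⁻¹*b)) + (if i = k then -(s*s⁻¹*b) else 0) := by
    intro k; split_ifs <;> ring
  rw [Finset.sum_congr rfl fun k _ => step k, Finset.sum_add_distrib, Finset.sum_add_distrib,
    Finset.sum_ite_eq' Finset.univ j, Finset.sum_ite_eq Finset.univ i, Finset.sum_const]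
  simp only [Finset.mem_univ, if_true, Finset.card_univ, Fintype.card_fin, nsmul_eq_mul]
  rw [mul_inv_cancel₀ hs]
  subst hb
  have hD' : salpha * (T:ℝ) + s ≠ 0 := by rwa [mul_comm] at hD
  split_ifs with h
  · field_simp; ring
  · field_simp; ring

lemma swZcol {T : ℕ} (hT : 3 ≤ T) (j : Fin T) (e : Fin (T-1)) :
    ∑ i : Fin (T-1), (if (j:ℕ) = (i:ℕ) + (e:ℕ) + 1 then (1:ℝ) else 0)
      = if (e:ℕ)+1 ≤ (j:ℕ) then 1 else 0 := by
  have hj := j.isLt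
  have he := e.isLt
  by_cases h : (e:ℕ)+1 ≤ (j:ℕ)
  · rw [if_pos h]
    have h1 : (∑ i : Fin (T-1), (if (j:ℕ) = (i:ℕ) + (e:ℕ) + 1 then (1:ℝ) else 0))
        = ∑ i : Fin (T-1), (if (i:ℕ) = (j:ℕ) - (e:ℕ) - 1 then (1:ℝ) else 0) :=
      Finset.sum_congr rfl fun i _ =>
        if_congr (show ((j:ℕ) = (i:ℕ) + (e:ℕ) + 1) ↔ ((i:ℕ) = (j:ℕ) - (e:ℕ) - 1) by omega) rfl rfl
    rw [h1, sum_fin_pick (fun _ => (1:ℝ))]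
    rw [if_pos (by omega : (j:ℕ) - (e:ℕ) - 1 < T - 1)]
  · rw [if_neg h]
    exact Finset.sum_eq_zero fun i _ => if_neg (by omega)

lemma swPoly (M : ℕ) (p q r : ℝ) :
    ∑ i ∈ Finset.range M, (p + q*(i:ℝ) + r*(i:ℝ)^2)
      = (M:ℝ)*p + q*((M:ℝ)*((M:ℝ)-1)/2) + r*((M:ℝ)*((M:ℝ)-1)*(2*(M:ℝ)-1)/6) := by
  induction M with
  | zero => simp
  | succ M ih => rw [Finset.sum_range_succ, ih]; push_cast; ring

end swHelpers

set_option maxHeartbeats 2000000 in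
/-- Single-intervention special case (Kenny et al.): in a standard stepped-wedge design
with `T` periods and `T−1` clusters, the expectation of the constant-effect GLS
estimator is `E(θ̂) = 6·Σⱼ wⱼδⱼ / [T(T−1)(T−2)(2+b−bT)]` with
`wⱼ = (T−j)[(b−1−bT)j + (1+b)(T−1)]` and `b = σα²/(Tσα² + σε²/n)`. -/
theorem single_intervention_constant_effect_expectation
    (T : ℕ) (hT : 3 ≤ T)
    (salpha seps n : ℝ) (hsalpha : 0 ≤ salpha) (hseps : 0 < seps) (hn : 0 < n)
    (b : ℝ) (hb : b = salpha / ((T : ℝ) * salpha + seps / n))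
    -- common covariance matrix Σ = σα²J + (σε²/n)I
    (V : Matrix (Fin T) (Fin T) ℝ)
    (hV : V = salpha • (Matrix.of fun _ _ => (1 : ℝ)) + (seps / n) • 1)
    -- cluster i crosses over at period i+1: working and true design matrices
    (X : Fin (T - 1) → Matrix (Fin T) (Fin 1) ℝ)
    (hX : ∀ i j k, X i j k = if (i : ℕ) + 1 ≤ (j : ℕ) then 1 else 0)
    (Z : Fin (T - 1) → Matrix (Fin T) (Fin (T - 1)) ℝ)
    (hZ : ∀ i j e, Z i j e = if (j : ℕ) = (i : ℕ) + (e : ℕ) + 1 then 1 else 0)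
    -- the weight matrix H of Theorem 1
    (S : Matrix (Fin 1) (Fin T) ℝ) (hS : S = ∑ i, (X i)ᵀ * V⁻¹)
    (AW : Matrix (Fin 1) (Fin 1) ℝ)
    (hAW : AW = (∑ i, (X i)ᵀ * V⁻¹ * X i)
        - S * ((((T - 1 : ℕ)) : ℝ)⁻¹ • ∑ i, X i))
    (H : Matrix (Fin 1) (Fin (T - 1)) ℝ)
    (hH : H = AW⁻¹ * ((∑ i, (X i)ᵀ * V⁻¹ * Z i)
        - S * ((((T - 1 : ℕ)) : ℝ)⁻¹ • ∑ i, Z i)))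
    -- weights, true exposure-time effects, and E(θ̂) = H·δ from Theorem 1
    (w : Fin (T - 1) → ℝ)
    (hw : ∀ j : Fin (T - 1),
      w j = ((T : ℝ) - ((j : ℕ) + 1 : ℕ))
        * ((b - 1 - b * (T : ℝ)) * ((j : ℕ) + 1 : ℕ) + (1 + b) * ((T : ℝ) - 1)))
    (δ : Fin (T - 1) → ℝ)
    (Eθ : Fin 1 → ℝ) (hEθ : Eθ = H *ᵥ δ) :
    Eθ 0 = 6 * (∑ j, w j * δ j)
      / ((T : ℝ) * ((T : ℝ) - 1) * ((T : ℝ) - 2) * (2 + b - b * (T : ℝ))) := by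
  have hmcast : (((T-1:ℕ)):ℝ) = (T:ℝ) - 1 := by
    rw [Nat.cast_sub (by omega : 1 ≤ T)]; norm_num
  set s : ℝ := seps / n with hsdef
  have hspos : 0 < s := div_pos hseps hn
  have hsne : s ≠ 0 := ne_of_gt hspos
  have hT3 : (3:ℝ) ≤ (T:ℝ) := by exact_mod_cast hT
  have hDpos : 0 < (T:ℝ)*salpha + s := by nlinarith
  have hDne : (T:ℝ)*salpha + s ≠ 0 := ne_of_gt hDpos
  have hb' : b = salpha / ((T:ℝ)*salpha + s) := hb
  have hbge : 0 ≤ b := by rw [hb']; positivity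
  have hbT : b * ((T:ℝ)-1) < 1 := by
    rw [hb', div_mul_eq_mul_div, div_lt_one hDpos]; nlinarith
  have hKpos : 0 < 2 + b - b*(T:ℝ) := by nlinarith
  have hKne : (2 + b - b*(T:ℝ)) ≠ 0 := ne_of_gt hKpos
  have hTne : (T:ℝ) ≠ 0 := by positivity
  have hT1ne : (T:ℝ) - 1 ≠ 0 := by nlinarith
  have hT2ne : (T:ℝ) - 2 ≠ 0 := by nlinarith
  have hVinv : V⁻¹ = Matrix.of (fun k j => s⁻¹ * ((if k = j then (1:ℝ) else 0) - b)) := by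
    rw [hV]; exact swVinv salpha s b hsne hDne hb'
  -- row of (X i)ᵀ V⁻¹
  have hXW : ∀ (i : Fin (T-1)) (j : Fin T), ((X i)ᵀ * V⁻¹) 0 j
      = s⁻¹ * ((if (i:ℕ)+1 ≤ (j:ℕ) then (1:ℝ) else 0) - b * ((T:ℝ) - (((i:ℕ)+1 : ℕ)))) := by
    intro i j
    rw [hVinv, Matrix.mul_apply]
    have hi := i.isLt
    rw [← swInner ((i:ℕ)+1) (by omega : (i:ℕ)+1 ≤ T) j s⁻¹ b]
    refine Finset.sum_congr rfl fun k _ => ?_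
    rw [Matrix.transpose_apply, hX, Matrix.of_apply]
  -- row of S
  have hS0 : ∀ j : Fin T, S 0 j = s⁻¹ * (((j:ℕ):ℝ) - b * ((T:ℝ)*((T:ℝ)-1)/2)) := by
    intro j
    have hj := j.isLt
    rw [hS, Matrix.sum_apply]
    rw [Finset.sum_congr rfl fun i _ => hXW i j]
    rw [Fin.sum_univ_eq_sum_range
      (fun i => s⁻¹ * ((if i+1 ≤ (j:ℕ) then (1:ℝ) else 0) - b * ((T:ℝ) - ((i+1 : ℕ)))))]
    rw [Finset.sum_congr rfl fun i _ =>
      (show s⁻¹ * ((if i+1 ≤ (j:ℕ) then (1:ℝ) else 0) - b * ((T:ℝ) - ((i+1 : ℕ))))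
          = (if i+1 ≤ (j:ℕ) then s⁻¹ else 0)
            + ((- (s⁻¹*b*((T:ℝ)-1))) + (s⁻¹*b)*(i:ℝ) + 0*(i:ℝ)^2) from by
        push_cast
        split_ifs <;> ring)]
    rw [Finset.sum_add_distrib, count_range_le (by omega : (j:ℕ) ≤ T-1) s⁻¹, swPoly, hmcast]
    push_cast
    ring
  -- column sum of X
  have hXcol : ∀ j : Fin T, (∑ i, X i) j 0 = ((j:ℕ):ℝ) := by
    intro j
    have hj := j.isLt
    rw [Matrix.sum_apply]
    rw [Finset.sum_congr rfl fun i _ => hX i j 0]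
    rw [Fin.sum_univ_eq_sum_range (fun i => if i+1 ≤ (j:ℕ) then (1:ℝ) else 0)]
    rw [count_range_le (by omega : (j:ℕ) ≤ T-1) (1:ℝ)]
    simp
  -- diagonal term ∑ Xᵀ V⁻¹ X
  have hXVX : ∀ i : Fin (T-1), ((X i)ᵀ * V⁻¹ * X i) 0 0
      = s⁻¹ * (((T:ℝ) - (i:ℕ) - 1) - b * ((T:ℝ) - (i:ℕ) - 1)^2) := by
    intro i
    have hi := i.isLt
    rw [Matrix.mul_apply]
    rw [Finset.sum_congr rfl fun k _ => by rw [hXW i k, hX i k 0]]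
    rw [Finset.sum_congr rfl fun (k : Fin T) _ =>
      (show s⁻¹ * ((if (i:ℕ)+1 ≤ (k:ℕ) then (1:ℝ) else 0) - b * ((T:ℝ) - (((i:ℕ)+1 : ℕ))))
          * (if (i:ℕ)+1 ≤ (k:ℕ) then (1:ℝ) else 0)
        = (s⁻¹ * (1 - b * ((T:ℝ) - (((i:ℕ)+1 : ℕ)))))
          * (if (i:ℕ)+1 ≤ (k:ℕ) then (1:ℝ) else 0) from by split_ifs <;> ring)]
    rw [← Finset.mul_sum, count_fin_ge (by omega : (i:ℕ)+1 ≤ T)]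
    push_cast
    ring
  have hterm1 : (∑ i, (X i)ᵀ * V⁻¹ * X i) 0 0
      = s⁻¹ * (((T:ℝ)*((T:ℝ)-1)/2) - b * ((T:ℝ)*((T:ℝ)-1)*(2*(T:ℝ)-1)/6)) := by
    rw [Matrix.sum_apply]
    rw [Finset.sum_congr rfl fun i _ => hXVX i]
    rw [Fin.sum_univ_eq_sum_range
      (fun i => s⁻¹ * (((T:ℝ) - (i:ℕ) - 1) - b * ((T:ℝ) - (i:ℕ) - 1)^2))]
    rw [Finset.sum_congr rfl fun i _ =>
      (show s⁻¹ * (((T:ℝ) - (i:ℕ) - 1) - b * ((T:ℝ) - (i:ℕ) - 1)^2)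
          = (s⁻¹*(((T:ℝ)-1) - b*((T:ℝ)-1)^2))
            + (s⁻¹*(-1 + 2*b*((T:ℝ)-1)))*(i:ℝ) + (-(s⁻¹*b))*(i:ℝ)^2 from by push_cast; ring)]
    rw [swPoly, hmcast]
    ring
  have hterm2 : (S * ((((T - 1 : ℕ)) : ℝ)⁻¹ • ∑ i, X i)) 0 0
      = ((T:ℝ)-1)⁻¹ * s⁻¹ * (((T:ℝ)*((T:ℝ)-1)*(2*(T:ℝ)-1)/6)
          - b * ((T:ℝ)*((T:ℝ)-1)/2)^2) := by
    rw [Matrix.mul_apply]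
    rw [Finset.sum_congr rfl fun j _ => by
      rw [Matrix.smul_apply, hXcol j, hS0 j, hmcast, smul_eq_mul]]
    rw [Fin.sum_univ_eq_sum_range
      (fun j => s⁻¹ * ((j:ℝ) - b * ((T:ℝ)*((T:ℝ)-1)/2)) * (((T:ℝ)-1)⁻¹ * (j:ℝ)))]
    rw [Finset.sum_congr rfl fun (j : ℕ) _ =>
      (show s⁻¹ * ((j:ℝ) - b * ((T:ℝ)*((T:ℝ)-1)/2)) * (((T:ℝ)-1)⁻¹ * (j:ℝ))
          = (0:ℝ) + (- (s⁻¹ * b * ((T:ℝ)*((T:ℝ)-1)/2) * ((T:ℝ)-1)⁻¹))*(j:ℝ)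
            + (s⁻¹ * ((T:ℝ)-1)⁻¹)*(j:ℝ)^2 from by ring)]
    rw [swPoly]
    ring
  have hAW00 : AW 0 0 = s⁻¹ * ((T:ℝ)*((T:ℝ)-2)*(2 + b - b*(T:ℝ))/12) := by
    rw [hAW, Matrix.sub_apply, hterm1, hterm2]
    field_simp
    ring
  have hAW00ne : AW 0 0 ≠ 0 := by
    rw [hAW00]
    have h1 : 0 < (T:ℝ) := by linarith
    have h2 : 0 < (T:ℝ) - 2 := by linarith
    have h3 : 0 < s⁻¹ := inv_pos.2 hspos
    exact ne_of_gt (by positivity)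
  have hAWinv : AW⁻¹ = Matrix.of (fun _ _ : Fin 1 => (AW 0 0)⁻¹) := by
    apply Matrix.inv_eq_right_inv
    ext i j
    have hi : i = 0 := Subsingleton.elim _ _
    have hj : j = 0 := Subsingleton.elim _ _
    subst hi; subst hj
    simp [Matrix.mul_apply, Matrix.one_apply, Fin.sum_univ_one,
      mul_inv_cancel₀ hAW00ne]
  -- Z side
  have hZXW : ∀ (i : Fin (T-1)) (e : Fin (T-1)), ((X i)ᵀ * V⁻¹ * Z i) 0 e
      = if (i:ℕ) + (e:ℕ) + 1 < T then s⁻¹ * (1 - b * ((T:ℝ) - (i:ℕ) - 1)) else 0 := by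
    intro i e
    have hi := i.isLt
    rw [Matrix.mul_apply]
    rw [Finset.sum_congr rfl fun k _ => by rw [hXW i k, hZ i k e]]
    have key := sum_fin_pick (n := T) (v := (i:ℕ)+(e:ℕ)+1)
      (fun x => s⁻¹ * ((if (i:ℕ)+1 ≤ x then (1:ℝ) else 0) - b * ((T:ℝ) - (((i:ℕ)+1 : ℕ)))))
    rw [Finset.sum_congr rfl fun (k : Fin T) _ =>
      (show s⁻¹ * ((if (i:ℕ)+1 ≤ (k:ℕ) then (1:ℝ) else 0) - b * ((T:ℝ) - (((i:ℕ)+1 : ℕ))))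
          * (if (k:ℕ) = (i:ℕ) + (e:ℕ) + 1 then (1:ℝ) else 0)
        = (if (k:ℕ) = (i:ℕ)+(e:ℕ)+1 then
            s⁻¹ * ((if (i:ℕ)+1 ≤ (k:ℕ) then (1:ℝ) else 0) - b * ((T:ℝ) - (((i:ℕ)+1 : ℕ))))
          else 0) from by split_ifs <;> ring)]
    rw [key]
    split_ifs with h1 h2
    · push_cast; ring
    · exact absurd (by omega : (i:ℕ)+1 ≤ (i:ℕ)+(e:ℕ)+1) h2
    · rfl
  have hterm1Z : ∀ e : Fin (T-1), (∑ i, (X i)ᵀ * V⁻¹ * Z i) 0 e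
      = ((T:ℝ)-1-(e:ℕ)) * (s⁻¹*(1 - b*((T:ℝ)-1)))
        + (s⁻¹*b) * (((T:ℝ)-1-(e:ℕ))*(((T:ℝ)-1-(e:ℕ))-1)/2) := by
    intro e
    have he := e.isLt
    have hAcast : (((T-1-(e:ℕ) : ℕ)):ℝ) = (T:ℝ)-1-(e:ℕ) := by
      rw [Nat.cast_sub (by omega : (e:ℕ) ≤ T-1), hmcast]
    rw [Matrix.sum_apply]
    rw [Finset.sum_congr rfl fun i _ => hZXW i e]
    rw [Fin.sum_univ_eq_sum_range
      (fun i => if i + (e:ℕ) + 1 < T then s⁻¹ * (1 - b * ((T:ℝ) - (i:ℕ) - 1)) else 0)]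
    rw [Finset.sum_congr rfl fun i _ =>
      if_congr (show (i + (e:ℕ) + 1 < T) ↔ (i < T-1-(e:ℕ)) by omega) rfl rfl]
    rw [sum_range_ite_lt (by omega : T-1-(e:ℕ) ≤ T-1)]
    rw [Finset.sum_congr rfl fun i _ =>
      (show s⁻¹ * (1 - b * ((T:ℝ) - (i:ℕ) - 1))
          = (s⁻¹*(1 - b*((T:ℝ)-1))) + (s⁻¹*b)*(i:ℝ) + 0*(i:ℝ)^2 from by push_cast; ring)]
    rw [swPoly, hAcast]
    ring
  have hZsum : ∀ (j : Fin T) (e : Fin (T-1)), (∑ i, Z i) j e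
      = if (e:ℕ)+1 ≤ (j:ℕ) then (1:ℝ) else 0 := by
    intro j e
    rw [Matrix.sum_apply]
    rw [Finset.sum_congr rfl fun i _ => hZ i j e]
    exact swZcol hT j e
  have hterm2Z : ∀ e : Fin (T-1), (S * ((((T - 1 : ℕ)) : ℝ)⁻¹ • ∑ i, Z i)) 0 e
      = ((T:ℝ)-1)⁻¹ * s⁻¹
        * ((((T:ℝ)*((T:ℝ)-1)/2) - b*((T:ℝ)*((T:ℝ)-1)/2)*(T:ℝ))
          - ((((e:ℕ):ℝ)+1)*((e:ℕ):ℝ)/2 - b*((T:ℝ)*((T:ℝ)-1)/2)*(((e:ℕ):ℝ)+1))) := by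
    intro e
    have he := e.isLt
    rw [Matrix.mul_apply]
    rw [Finset.sum_congr rfl fun j _ => by
      rw [Matrix.smul_apply, hZsum j e, hS0 j, hmcast, smul_eq_mul]]
    rw [Fin.sum_univ_eq_sum_range
      (fun j => s⁻¹ * ((j:ℝ) - b * ((T:ℝ)*((T:ℝ)-1)/2))
        * (((T:ℝ)-1)⁻¹ * (if (e:ℕ)+1 ≤ j then (1:ℝ) else 0)))]
    rw [Finset.sum_congr rfl fun (j : ℕ) _ =>
      (show s⁻¹ * ((j:ℝ) - b * ((T:ℝ)*((T:ℝ)-1)/2))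
            * (((T:ℝ)-1)⁻¹ * (if (e:ℕ)+1 ≤ j then (1:ℝ) else 0))
          = (if (e:ℕ)+1 ≤ j then
              ((T:ℝ)-1)⁻¹ * s⁻¹ * ((j:ℝ) - b * ((T:ℝ)*((T:ℝ)-1)/2)) else 0) from by
        split_ifs <;> ring)]
    rw [sum_range_ite_le (by omega : (e:ℕ)+1 ≤ T)
      (fun j => ((T:ℝ)-1)⁻¹ * s⁻¹ * ((j:ℝ) - b * ((T:ℝ)*((T:ℝ)-1)/2)))]
    rw [Finset.sum_congr rfl (fun (j : ℕ) _ =>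
      (show ((T:ℝ)-1)⁻¹ * s⁻¹ * ((j:ℝ) - b * ((T:ℝ)*((T:ℝ)-1)/2))
          = (- (((T:ℝ)-1)⁻¹ * s⁻¹ * b * ((T:ℝ)*((T:ℝ)-1)/2)))
            + (((T:ℝ)-1)⁻¹ * s⁻¹)*(j:ℝ) + 0*(j:ℝ)^2 from by ring))]
    rw [Finset.sum_congr rfl (fun (j : ℕ) _ =>
      (show ((T:ℝ)-1)⁻¹ * s⁻¹ * ((j:ℝ) - b * ((T:ℝ)*((T:ℝ)-1)/2))
          = (- (((T:ℝ)-1)⁻¹ * s⁻¹ * b * ((T:ℝ)*((T:ℝ)-1)/2)))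
            + (((T:ℝ)-1)⁻¹ * s⁻¹)*(j:ℝ) + 0*(j:ℝ)^2 from by ring))]
    rw [swPoly, swPoly]
    push_cast
    ring
  -- entries of H
  have hH0 : ∀ e : Fin (T-1), H 0 e
      = (AW 0 0)⁻¹ * ((∑ i, (X i)ᵀ * V⁻¹ * Z i) 0 e
          - (S * ((((T - 1 : ℕ)) : ℝ)⁻¹ • ∑ i, Z i)) 0 e) := by
    intro e
    rw [hH, hAWinv, Matrix.mul_apply, Fin.sum_univ_one, Matrix.of_apply, Matrix.sub_apply]
  -- final computation
  rw [hEθ]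
  have hmv : (H *ᵥ δ) 0 = ∑ e, H 0 e * δ e := by
    simp [Matrix.mulVec, dotProduct]
  rw [hmv, Finset.mul_sum, Finset.sum_div]
  refine Finset.sum_congr rfl fun e _ => ?_
  rw [hH0 e, hterm1Z e, hterm2Z e, hAW00, hw e]
  push_cast
  field_simp
  ring
end

section
/- In a concurrent stepped-wedge design with m interventions, if the effect vector of intervention k is constant, δₖ = δₖ·1_{T−1}, then E(θ̂ₖ) = δₖ + (1/g)·((d/c)·r' − v')·Σ_{k*≠k} δ_{k*}. In particular the identity (1/c)·r'1 + (1/g)·((d/c)·r' − v')·1 = 1 holds, i.e. the weights applied to δₖ's own components sum to one. -/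
/-!
Summing the closed forms of `r` and `v` over the `T - 1` periods gives `∑ r = c` and `∑ v = d`.
Hence the own-effect weights `(1/c)·r'1 = 1` and the cross weights `((d/c)·r' − v')·1 = 0`:
a constant own effect `δₖ` passes through unchanged and contributes nothing to the cross term.
-/

open Finset

theorem Fin.sum_quadratic_succ (n : ℕ) (p q u : ℝ) :
    ∑ j : Fin n, (p + q * ((j : ℝ) + 1) + u * ((j : ℝ) + 1) ^ 2)
      = p * n + q * (n * (n + 1) / 2) + u * (n * (n + 1) * (2 * n + 1) / 6) := by
  rw [Fin.sum_univ_eq_sum_range (fun j => p + q * ((j : ℝ) + 1) + u * ((j : ℝ) + 1) ^ 2)]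
  induction n with
  | zero => simp
  | succ n ih =>
    rw [sum_range_succ, ih]
    push_cast
    ring

namespace SteppedWedge

-- The paper's vectors `r` and `v`, as functions of the period `i = 1, …, T - 1`.
noncomputable def r (T : ℕ) (b : ℝ) (i : ℕ) : ℝ :=
  ((T : ℝ) - i) * (1 + b * (1 - (T : ℝ) - i) / 2)

noncomputable def v (T mI : ℕ) (b : ℝ) (i : ℕ) : ℝ :=
  ((T : ℝ) - i) * (1 - b * (T : ℝ) + i / ((T : ℝ) - 1)) / (2 * (mI : ℝ))

theorem sum_r (T : ℕ) (b : ℝ) :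
    ∑ j : Fin (T - 1), r T b (j + 1) = T * (T - 1) * (3 + b - 2 * b * T) / 6 := by
  cases T with
  | zero => simp
  | succ n =>
    rw [Nat.add_sub_cancel]
    calc ∑ j : Fin n, r (n + 1) b (j + 1)
        = ∑ j : Fin n, (((n : ℝ) + 1) * (1 - b * n / 2) + (-1 - b / 2)
            * ((j : ℝ) + 1) + b / 2 * ((j : ℝ) + 1) ^ 2) := by
          refine sum_congr rfl fun j _ => ?_
          simp only [r]
          push_cast
          ring
      _ = _ := by
          rw [Fin.sum_quadratic_succ]
          push_cast
          ring

theorem sum_v (T mI : ℕ) (hT : 2 ≤ T) (b : ℝ) :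
    ∑ j : Fin (T - 1), v T mI b (j + 1)
      = T * (4 * T - 2 - 3 * b * T * (T - 1)) / (12 * mI) := by
  obtain ⟨n, rfl⟩ := Nat.exists_eq_add_of_le' hT
  have hn : ((n : ℝ) + 1) ≠ 0 := by positivity
  rw [show n + 2 - 1 = n + 1 from rfl]
  calc ∑ j : Fin (n + 1), v (n + 2) mI b (j + 1)
      = (∑ j : Fin (n + 1), (((n : ℝ) + 2) * (1 - b * (n + 2))
          + ((n + 2) / (n + 1) - (1 - b * (n + 2))) * ((j : ℝ) + 1)
          + (-1 / (n + 1)) * ((j : ℝ) + 1) ^ 2)) / (2 * mI) := by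
        rw [sum_div]
        refine sum_congr rfl fun j _ => ?_
        simp only [v]
        push_cast
        rw [show (n : ℝ) + 2 - 1 = n + 1 by ring]
        field_simp
        ring
    _ = _ := by
        rw [Fin.sum_quadratic_succ]
        push_cast
        field_simp
        ring

end SteppedWedge

theorem sum_mul_sum_eq_add_sum_erase {ι κ R : Type*} [Fintype ι] [Fintype κ] [DecidableEq κ]
    [CommSemiring R] (w : ι → R) (δ : κ → ι → R) (k : κ) (δk : R) (hconst : ∀ e, δ k e = δk) :
    ∑ e, w e * ∑ k', δ k' e = δk * ∑ e, w e + ∑ e, w e * ∑ k' ∈ univ.erase k, δ k' e := by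
  rw [mul_sum, ← sum_add_distrib]
  refine sum_congr rfl fun e _ => ?_
  rw [← add_sum_erase _ _ (mem_univ k), hconst]
  ring

theorem concurrent_constant_own_effect_general
    (T mI : ℕ) (hT : 3 ≤ T)
    (b c d g : ℝ)
    (hc : c = (T : ℝ) * ((T : ℝ) - 1) * (3 + b - 2 * b * (T : ℝ)) / 6)
    (hd : d = (T : ℝ) * (4 * (T : ℝ) - 2 - 3 * b * (T : ℝ) * ((T : ℝ) - 1)) / (12 * (mI : ℝ)))
    (hc0 : c ≠ 0)
    (r v : Fin (T - 1) → ℝ)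
    (hr : ∀ j : Fin (T - 1),
      r j = ((T : ℝ) - ((j : ℕ) + 1 : ℕ)) * (1 + b * (1 - (T : ℝ) - ((j : ℕ) + 1 : ℕ)) / 2))
    (hv : ∀ j : Fin (T - 1),
      v j = ((T : ℝ) - ((j : ℕ) + 1 : ℕ))
        * (1 - b * (T : ℝ) + ((j : ℕ) + 1 : ℕ) / ((T : ℝ) - 1)) / (2 * (mI : ℝ)))
    (δ : Fin mI → Fin (T - 1) → ℝ) (k : Fin mI) (δk : ℝ)
    (hconst : ∀ e, δ k e = δk)
    -- Equation (8) from Proposition 1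
    (Eθ : Fin mI → ℝ)
    (hEθ : ∀ k' : Fin mI,
      Eθ k' = (1 / c) * (∑ e, r e * δ k' e)
        + (1 / g) * (∑ e, ((d / c) * r e - v e) * (∑ k'', δ k'' e))) :
    Eθ k = δk + (1 / g) * (∑ e, ((d / c) * r e - v e) * (∑ k'' ∈ Finset.univ.erase k, δ k'' e))
    ∧ (1 / c) * (∑ e, r e) + (1 / g) * (∑ e, ((d / c) * r e - v e)) = 1 := by
  have hSr : ∑ e, r e = c := by
    rw [hc, ← SteppedWedge.sum_r]
    exact sum_congr rfl fun j _ => hr j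
  have hSv : ∑ e, v e = d := by
    rw [hd, ← SteppedWedge.sum_v T mI (by omega)]
    exact sum_congr rfl fun j _ => hv j
  have hSw : ∑ e, ((d / c) * r e - v e) = 0 := by
    rw [sum_sub_distrib, ← mul_sum, hSr, hSv, div_mul_cancel₀ d hc0, sub_self]
  have hown : ∑ e, r e * δ k e = c * δk := by
    rw [← hSr, sum_mul]
    exact sum_congr rfl fun e _ => by rw [hconst]
  refine ⟨?_, by rw [hSr, hSw, one_div_mul_cancel hc0, mul_zero, add_zero]⟩
  rw [hEθ k, hown, sum_mul_sum_eq_add_sum_erase _ δ k δk hconst, hSw, mul_zero,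
    zero_add, one_div, inv_mul_cancel_left₀ hc0]

/-- Corollary 1 (first part): in a concurrent stepped-wedge design with `m`
interventions, if intervention `k` has a constant effect `δₖ·1`, then
`E(θ̂ₖ) = δₖ + (1/g)·((d/c)·r′ − v′)·Σ_{k*≠k} δ_{k*}`; in particular the own-block
weights satisfy `(1/c)·r′1 + (1/g)·((d/c)·r′ − v′)·1 = 1`. -/
theorem concurrent_constant_own_effect
    (T mI : ℕ) (hT : 3 ≤ T) (hm : 1 ≤ mI)
    (b c d g : ℝ)
    (hc : c = (T : ℝ) * ((T : ℝ) - 1) * (3 + b - 2 * b * (T : ℝ)) / 6)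
    (hd : d = (T : ℝ) * (4 * (T : ℝ) - 2 - 3 * b * (T : ℝ) * ((T : ℝ) - 1)) / (12 * (mI : ℝ)))
    (hg : g = (T : ℝ) * ((T : ℝ) - 2) * (2 + b - b * (T : ℝ)) / 12)
    (hc0 : c ≠ 0) (hg0 : g ≠ 0)
    (r v : Fin (T - 1) → ℝ)
    (hr : ∀ j : Fin (T - 1),
      r j = ((T : ℝ) - ((j : ℕ) + 1 : ℕ)) * (1 + b * (1 - (T : ℝ) - ((j : ℕ) + 1 : ℕ)) / 2))
    (hv : ∀ j : Fin (T - 1),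
      v j = ((T : ℝ) - ((j : ℕ) + 1 : ℕ))
        * (1 - b * (T : ℝ) + ((j : ℕ) + 1 : ℕ) / ((T : ℝ) - 1)) / (2 * (mI : ℝ)))
    (δ : Fin mI → Fin (T - 1) → ℝ) (k : Fin mI) (δk : ℝ)
    (hconst : ∀ e, δ k e = δk)
    -- Equation (8) from Proposition 1
    (Eθ : Fin mI → ℝ)
    (hEθ : ∀ k' : Fin mI,
      Eθ k' = (1 / c) * (∑ e, r e * δ k' e)
        + (1 / g) * (∑ e, ((d / c) * r e - v e) * (∑ k'', δ k'' e))) :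
    Eθ k = δk + (1 / g) * (∑ e, ((d / c) * r e - v e) * (∑ k'' ∈ Finset.univ.erase k, δ k'' e))
    ∧ (1 / c) * (∑ e, r e) + (1 / g) * (∑ e, ((d / c) * r e - v e)) = 1 :=
  concurrent_constant_own_effect_general T mI hT b c d g hc hd hc0 r v hr hv δ k δk hconst Eθ hEθ
end

section
/- In a concurrent stepped-wedge design with m interventions, if every intervention has a constant effect, δ_{k*} = δ_{k*}·1_{T−1} for all k* = 1,…,m, then E(θ̂ₖ) = δₖ for each k; i.e., the constant-effect GLS estimator is unbiased. Equivalently, the row sums of the off-diagonal weight blocks (1/g)((d/c)r' − v') applied to the all-ones vector vanish: (d/(cg))·r'1_{T−1} = (1/g)·v'1_{T−1}. -/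
lemma poly_sum (A B C : ℝ) (n : ℕ) :
    ∑ j ∈ Finset.range n, (A + B * ((j : ℝ) + 1) + C * ((j : ℝ) + 1) ^ 2)
      = A * n + B * (n * (n + 1) / 2) + C * (n * (n + 1) * (2 * n + 1) / 6) := by
  induction n with
  | zero => simp
  | succ n ih =>
    rw [Finset.sum_range_succ, ih]
    push_cast
    ring

/-- Corollary 1 (second part): in a concurrent stepped-wedge design with `m`
interventions, if every intervention has a constant effect `δ_{k*}·1`, then
`E(θ̂ₖ) = δₖ` for each `k` (the constant-effect GLS estimator is unbiased);
equivalently `(d/(cg))·r′1 = (1/g)·v′1`. -/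
theorem concurrent_all_constant_unbiased
    (T mI : ℕ) (hT : 3 ≤ T) (hm : 1 ≤ mI)
    (b c d g : ℝ)
    (hc : c = (T : ℝ) * ((T : ℝ) - 1) * (3 + b - 2 * b * (T : ℝ)) / 6)
    (hd : d = (T : ℝ) * (4 * (T : ℝ) - 2 - 3 * b * (T : ℝ) * ((T : ℝ) - 1)) / (12 * (mI : ℝ)))
    (hg : g = (T : ℝ) * ((T : ℝ) - 2) * (2 + b - b * (T : ℝ)) / 12)
    (hc0 : c ≠ 0) (hg0 : g ≠ 0)
    (r v : Fin (T - 1) → ℝ)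
    (hr : ∀ j : Fin (T - 1),
      r j = ((T : ℝ) - ((j : ℕ) + 1 : ℕ)) * (1 + b * (1 - (T : ℝ) - ((j : ℕ) + 1 : ℕ)) / 2))
    (hv : ∀ j : Fin (T - 1),
      v j = ((T : ℝ) - ((j : ℕ) + 1 : ℕ))
        * (1 - b * (T : ℝ) + ((j : ℕ) + 1 : ℕ) / ((T : ℝ) - 1)) / (2 * (mI : ℝ)))
    (δ : Fin mI → Fin (T - 1) → ℝ) (δc : Fin mI → ℝ)
    (hconst : ∀ (k' : Fin mI) e, δ k' e = δc k')
    -- Equation (8) from Proposition 1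
    (Eθ : Fin mI → ℝ)
    (hEθ : ∀ k' : Fin mI,
      Eθ k' = (1 / c) * (∑ e, r e * δ k' e)
        + (1 / g) * (∑ e, ((d / c) * r e - v e) * (∑ k'', δ k'' e))) :
    (∀ k : Fin mI, Eθ k = δc k)
    ∧ (d / (c * g)) * (∑ e, r e) = (1 / g) * (∑ e, v e) := by
  have hm0 : (mI : ℝ) ≠ 0 := by positivity
  have hT1 : (1 : ℕ) ≤ T := by omega
  have hN : ((T - 1 : ℕ) : ℝ) = (T : ℝ) - 1 := by
    push_cast [Nat.cast_sub hT1]; ring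
  have hTcast : (T : ℝ) = ((T - 1 : ℕ) : ℝ) + 1 := by rw [hN]; ring
  have hN0 : ((T - 1 : ℕ) : ℝ) ≠ 0 := by
    rw [hN]
    have : (3 : ℝ) ≤ (T : ℝ) := by exact_mod_cast hT
    linarith
  -- sum of r
  have hsumr : (∑ e, r e) = c := by
    have h1 : (∑ e, r e)
        = ∑ j ∈ Finset.range (T - 1),
            (((T : ℝ) + b / 2 * ((T : ℝ) - (T : ℝ) ^ 2))
              + (-1 - b / 2) * ((j : ℝ) + 1)
              + (b / 2) * ((j : ℝ) + 1) ^ 2) := by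
      rw [← Fin.sum_univ_eq_sum_range]
      refine Finset.sum_congr rfl fun j _ => ?_
      rw [hr j]; push_cast; ring
    rw [h1, poly_sum, hc, hTcast]
    ring
  -- sum of v
  have hsumv : (∑ e, v e) = d := by
    have h1 : (∑ e, v e)
        = ∑ j ∈ Finset.range (T - 1),
            ((((T : ℝ) * (1 - b * (T : ℝ))) / (2 * (mI : ℝ)))
              + ((-(1 - b * (T : ℝ)) + (T : ℝ) / ((T : ℝ) - 1)) / (2 * (mI : ℝ))) * ((j : ℝ) + 1)
              + (-(1 / (((T : ℝ) - 1) * (2 * (mI : ℝ))))) * ((j : ℝ) + 1) ^ 2) := by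
      rw [← Fin.sum_univ_eq_sum_range]
      refine Finset.sum_congr rfl fun j _ => ?_
      rw [hv j]
      have hN0' : (T : ℝ) - 1 ≠ 0 := by rw [← hN]; exact hN0
      push_cast
      field_simp
      ring
    have hN0' : (T : ℝ) - 1 ≠ 0 := by rw [← hN]; exact hN0
    rw [h1, poly_sum, hd, hN]
    field_simp
    ring
  constructor
  · intro k
    rw [hEθ k]
    have h1 : (∑ e, r e * δ k e) = c * δc k := by
      simp only [hconst]
      rw [← Finset.sum_mul, hsumr]
    have h2 : (∑ e, ((d / c) * r e - v e) * (∑ k'', δ k'' e)) = 0 := by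
      have hz : (∑ e, ((d / c) * r e - v e)) = 0 := by
        rw [Finset.sum_sub_distrib, ← Finset.mul_sum, hsumr, hsumv]
        field_simp
        ring
      have : (∑ e, ((d / c) * r e - v e) * (∑ k'', δ k'' e))
          = (∑ e, ((d / c) * r e - v e)) * (∑ k'', δc k'') := by
        rw [Finset.sum_mul]
        refine Finset.sum_congr rfl fun e _ => ?_
        simp only [hconst]
      rw [this, hz, zero_mul]
    rw [h1, h2]
    field_simp
    ring
  · rw [hsumr, hsumv]
    field_simp
end

section
/- For the T = 3 factorial stepped-wedge design with four clusters having design matrices X₁ = [[0,0],[1,0],[1,1]], X₂ = [[0,0],[0,0],[1,0]], X₃ = [[0,0],[0,0],[0,1]], X₄ = [[0,0],[0,1],[1,1]] and the corresponding exposure-indicator matrices Z as specified, the weight matrix is H = (1/(4(b−1)))·[[2b−3, 2b−1, 1, −1],[1, −1, 2b−3, 2b−1]], where b = σα²/(3σα² + σε²/n) and all clusters share Σ = σα²J₃ + (σε²/n)I₃ (assuming b ≠ 1). -/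
open Matrix

set_option maxHeartbeats 2000000 in
private lemma factorial_T3_aux_Vinv (salpha c b : ℝ) (hc0 : c ≠ 0)
    (hsa : salpha = b * (3 * salpha + c)) :
    (salpha • (Matrix.of fun _ _ => (1 : ℝ)) + c • (1 : Matrix (Fin 3) (Fin 3) ℝ))⁻¹
      = !![(1-b)/c, -b/c, -b/c; -b/c, (1-b)/c, -b/c; -b/c, -b/c, (1-b)/c] := by
  apply Matrix.inv_eq_right_inv
  ext i j
  fin_cases i <;> fin_cases j <;>
    · simp [Matrix.mul_apply, Fin.sum_univ_succ, Matrix.one_apply]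
      field_simp
      first
      | linear_combination c * hsa
      | linear_combination c^2 * hsa
      | linear_combination hsa

set_option maxHeartbeats 2000000 in
private lemma factorial_T3_aux_AW (c b : ℝ) (hc0 : c ≠ 0)
    (W : Matrix (Fin 3) (Fin 3) ℝ)
    (hW : W = !![(1-b)/c, -b/c, -b/c; -b/c, (1-b)/c, -b/c; -b/c, -b/c, (1-b)/c])
    (X : Fin 4 → Matrix (Fin 3) (Fin 2) ℝ)
    (hX : X = ![!![0, 0; 1, 0; 1, 1], !![0, 0; 0, 0; 1, 0],
                !![0, 0; 0, 0; 0, 1], !![0, 0; 0, 1; 1, 1]]) :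
    ((∑ i, (X i)ᵀ * W * X i) - (∑ i, (X i)ᵀ * W) * (((4 : ℕ) : ℝ)⁻¹ • ∑ i, X i))
      = !![(3-4*b)/(2*c), -1/(2*c); -1/(2*c), (3-4*b)/(2*c)] := by
  subst hW hX
  ext i j
  fin_cases i <;> fin_cases j <;>
    · simp [Matrix.mul_apply, Matrix.sum_apply, Fin.sum_univ_succ]
      field_simp
      ring

set_option maxHeartbeats 2000000 in
private lemma factorial_T3_aux_AWinv (c b : ℝ) (hc0 : c ≠ 0)
    (h2b : 1 - 2*b ≠ 0) (h1b : 1 - b ≠ 0) :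
    (!![(3-4*b)/(2*c), -1/(2*c); -1/(2*c), (3-4*b)/(2*c)])⁻¹
      = (c/(4*(1-2*b)*(1-b))) • !![3-4*b, 1; 1, 3-4*b] := by
  have h2b' : 1 - b * 2 ≠ 0 := by rwa [mul_comm] at h2b
  apply Matrix.inv_eq_right_inv
  ext i j
  fin_cases i <;> fin_cases j <;>
    · simp [Matrix.mul_apply, Fin.sum_univ_succ, Matrix.one_apply]
      field_simp
      ring

set_option maxHeartbeats 4000000 in
private lemma factorial_T3_aux_final (c b : ℝ) (hc0 : c ≠ 0)
    (h2b : 1 - 2*b ≠ 0) (hb1' : b - 1 ≠ 0)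
    (W : Matrix (Fin 3) (Fin 3) ℝ)
    (hW : W = !![(1-b)/c, -b/c, -b/c; -b/c, (1-b)/c, -b/c; -b/c, -b/c, (1-b)/c])
    (X : Fin 4 → Matrix (Fin 3) (Fin 2) ℝ)
    (hX : X = ![!![0, 0; 1, 0; 1, 1], !![0, 0; 0, 0; 1, 0],
                !![0, 0; 0, 0; 0, 1], !![0, 0; 0, 1; 1, 1]])
    (Z : Fin 4 → Matrix (Fin 3) (Fin 4) ℝ)
    (hZ : Z = ![!![0, 0, 0, 0; 1, 0, 0, 0; 0, 1, 1, 0],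
                !![0, 0, 0, 0; 0, 0, 0, 0; 1, 0, 0, 0],
                !![0, 0, 0, 0; 0, 0, 0, 0; 0, 0, 1, 0],
                !![0, 0, 0, 0; 0, 0, 1, 0; 1, 0, 0, 1]]) :
    ((c/(4*(1-2*b)*(1-b))) • !![3-4*b, 1; 1, 3-4*b]) *
      ((∑ i, (X i)ᵀ * W * Z i) - (∑ i, (X i)ᵀ * W) * (((4 : ℕ) : ℝ)⁻¹ • ∑ i, Z i))
      = (1 / (4 * (b - 1))) •
        !![2 * b - 3, 2 * b - 1, 1, -1; 1, -1, 2 * b - 3, 2 * b - 1] := by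
  subst hW hX hZ
  have h1b : 1 - b ≠ 0 := by intro h; apply hb1'; linarith
  ext i j
  fin_cases i <;> fin_cases j <;>
    · simp [Matrix.mul_apply, Matrix.sum_apply, Fin.sum_univ_succ]
      field_simp
      ring

/-- The `T = 3` factorial stepped-wedge example: with the four clusters' design
matrices and exposure-indicator matrices as specified, the weight matrix is
`H = (1/(4(b−1)))·[[2b−3, 2b−1, 1, −1],[1, −1, 2b−3, 2b−1]]`,
where `b = σα²/(3σα² + σε²/n)` and `Σ = σα²J₃ + (σε²/n)I₃`. -/
theorem factorial_T3_weight_matrix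
    (salpha seps n : ℝ) (hsalpha : 0 ≤ salpha) (hseps : 0 < seps) (hn : 0 < n)
    (b : ℝ) (hb : b = salpha / (3 * salpha + seps / n)) (hb1 : b ≠ 1)
    (V : Matrix (Fin 3) (Fin 3) ℝ)
    (hV : V = salpha • (Matrix.of fun _ _ => (1 : ℝ)) + (seps / n) • 1)
    (X : Fin 4 → Matrix (Fin 3) (Fin 2) ℝ)
    (hX : X = ![!![0, 0; 1, 0; 1, 1], !![0, 0; 0, 0; 1, 0],
                !![0, 0; 0, 0; 0, 1], !![0, 0; 0, 1; 1, 1]])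
    (Z : Fin 4 → Matrix (Fin 3) (Fin 4) ℝ)
    (hZ : Z = ![!![0, 0, 0, 0; 1, 0, 0, 0; 0, 1, 1, 0],
                !![0, 0, 0, 0; 0, 0, 0, 0; 1, 0, 0, 0],
                !![0, 0, 0, 0; 0, 0, 0, 0; 0, 0, 1, 0],
                !![0, 0, 0, 0; 0, 0, 1, 0; 1, 0, 0, 1]])
    (S : Matrix (Fin 2) (Fin 3) ℝ) (hS : S = ∑ i, (X i)ᵀ * V⁻¹)
    (AW : Matrix (Fin 2) (Fin 2) ℝ)
    (hAW : AW = (∑ i, (X i)ᵀ * V⁻¹ * X i) - S * (((4 : ℕ) : ℝ)⁻¹ • ∑ i, X i))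
    (H : Matrix (Fin 2) (Fin 4) ℝ)
    (hH : H = AW⁻¹ * ((∑ i, (X i)ᵀ * V⁻¹ * Z i) - S * (((4 : ℕ) : ℝ)⁻¹ • ∑ i, Z i))) :
    H = (1 / (4 * (b - 1))) •
      !![2 * b - 3, 2 * b - 1, 1, -1; 1, -1, 2 * b - 3, 2 * b - 1] := by
  have hc : 0 < seps / n := div_pos hseps hn
  have hc0 : seps / n ≠ 0 := hc.ne'
  have hd : 0 < 3 * salpha + seps / n := by positivity
  have hd0 : (3 * salpha + seps / n) ≠ 0 := hd.ne'
  have hb3 : 3 * b < 1 := by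
    rw [hb, ← mul_div_assoc, div_lt_one hd]; linarith
  have hbnn : 0 ≤ b := by rw [hb]; positivity
  have h2b : 1 - 2 * b ≠ 0 := by intro h; nlinarith
  have h1b : 1 - b ≠ 0 := by intro h; nlinarith
  have hb1' : b - 1 ≠ 0 := sub_ne_zero.mpr hb1
  have hsa : salpha = b * (3 * salpha + seps / n) := by
    rw [hb]; field_simp
  have hVinv : V⁻¹ = !![(1-b)/(seps/n), -b/(seps/n), -b/(seps/n);
      -b/(seps/n), (1-b)/(seps/n), -b/(seps/n);
      -b/(seps/n), -b/(seps/n), (1-b)/(seps/n)] := by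
    rw [hV]; exact factorial_T3_aux_Vinv salpha (seps/n) b hc0 hsa
  have hAW' : AW = !![(3-4*b)/(2*(seps/n)), -1/(2*(seps/n));
      -1/(2*(seps/n)), (3-4*b)/(2*(seps/n))] := by
    rw [hAW, hS, hVinv]
    exact factorial_T3_aux_AW (seps/n) b hc0 _ rfl X hX
  rw [hH, hAW', factorial_T3_aux_AWinv (seps/n) b hc0 h2b h1b, hS, hVinv]
  exact factorial_T3_aux_final (seps/n) b hc0 h2b hb1' _ rfl X hX Z hZ
end
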